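/- arXiv:2407.03196 — 9 statements merged into one kernel-verified Lean document; each statement's English description precedes it below -/
import Mathlib

section
/- Let R be an associative ring with 1. If R is a Bezout ring (every finitely generated right ideal is principal), then R is a ring of simple range 2 if and only if the following holds: whenever RaR + RbR + RcR = R with c ≠ 0, there exist p, q, d ∈ R such that (pa+qb)R + pcR = dR and RdR = R. -/
/-- A ring has simple range 2 if `RaR + RbR + RcR = R` with `c ≠ 0` implies
`R(pa+qb)R + R(pc)R = R` for some `p, q`. -/
def SimpleRange2 (R : Type*) [Ring R] : Prop :=
  ∀ a b c : R, c ≠ 0 → (1 : R) ∈ TwoSidedIdeal.span {a, b, c} →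
    ∃ p q : R, (1 : R) ∈ TwoSidedIdeal.span {p * a + q * b, p * c}

/-- A (right) Bezout ring: every finitely generated right ideal is principal. -/
def IsRightBezout (R : Type*) [Ring R] : Prop :=
  ∀ I : Submodule Rᵐᵒᵖ R, I.FG → ∃ d : R, I = Submodule.span Rᵐᵒᵖ {d}

/-- The right-ideal span is contained in the two-sided span. -/
lemma submoduleSpan_le_twoSidedSpan {R : Type*} [Ring R] (s : Set R) :
    ∀ x ∈ Submodule.span Rᵐᵒᵖ s, x ∈ TwoSidedIdeal.span s := by
  intro x hx
  refine Submodule.span_induction (fun y hy => TwoSidedIdeal.subset_span hy)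
    (TwoSidedIdeal.span s).zero_mem
    (fun y z _ _ hy hz => (TwoSidedIdeal.span s).add_mem hy hz)
    (fun r y _ hy => ?_) hx
  exact TwoSidedIdeal.mul_mem_right _ _ _ hy

theorem simpleRange2_iff_of_bezout (R : Type*) [Ring R] (hB : IsRightBezout R) :
    SimpleRange2 R ↔
      ∀ a b c : R, c ≠ 0 → (1 : R) ∈ TwoSidedIdeal.span {a, b, c} →
        ∃ p q d : R,
          Submodule.span Rᵐᵒᵖ {p * a + q * b, p * c} = Submodule.span Rᵐᵒᵖ {d} ∧
          (1 : R) ∈ TwoSidedIdeal.span {d} := by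
  constructor
  · intro h a b c hc h1
    obtain ⟨p, q, hpq⟩ := h a b c hc h1
    obtain ⟨d, hd⟩ := hB (Submodule.span Rᵐᵒᵖ {p * a + q * b, p * c})
      (Submodule.fg_span (Set.toFinite _))
    refine ⟨p, q, d, hd, ?_⟩
    rw [TwoSidedIdeal.mem_span_iff] at hpq ⊢
    intro I hI
    refine hpq I ?_
    intro x hx
    have : x ∈ Submodule.span Rᵐᵒᵖ {d} := hd ▸ Submodule.subset_span hx
    have := submoduleSpan_le_twoSidedSpan {d} x this
    exact TwoSidedIdeal.mem_span_iff.1 this I hI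
  · intro h a b c hc h1
    obtain ⟨p, q, d, hd, h1d⟩ := h a b c hc h1
    refine ⟨p, q, ?_⟩
    rw [TwoSidedIdeal.mem_span_iff] at h1d ⊢
    intro I hI
    refine h1d I ?_
    intro x hx
    rw [Set.mem_singleton_iff] at hx
    subst hx
    have : x ∈ Submodule.span Rᵐᵒᵖ ({p * a + q * b, p * c} : Set R) := by
      rw [hd]; exact Submodule.subset_span rfl
    exact TwoSidedIdeal.mem_span_iff.1
      (submoduleSpan_le_twoSidedSpan _ x this) I hI
end

section
/- Let R be a Bezout domain with the Dubrovin–Komarnytsky condition (for every a ∈ R there is a* with RaR = a*R = Ra*, and every factor of an invariant element is invariant). If RaR = R and RbR = R, then RabR = R. -/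
/-- An element is invariant if `aR = Ra` (as sets). -/
def InvariantElem {R : Type*} [Ring R] (a : R) : Prop :=
  (Submodule.span Rᵐᵒᵖ {a} : Set R) = (Ideal.span {a} : Set R)

/-- A Bezout ring: every finitely generated one-sided ideal is principal. -/
def IsBezout2 (R : Type*) [Ring R] : Prop :=
  (∀ I : Submodule Rᵐᵒᵖ R, I.FG → ∃ d : R, I = Submodule.span Rᵐᵒᵖ {d}) ∧
  (∀ I : Ideal R, I.FG → ∃ d : R, I = Ideal.span {d})

/-- The Dubrovin condition: each two-sided ideal `RaR` equals `a*R = Ra*`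
for some (invariant) element `a*`. -/
def DubrovinCondition (R : Type*) [Ring R] : Prop :=
  ∀ a : R, ∃ as : R,
    (TwoSidedIdeal.span {a} : Set R) = (Submodule.span Rᵐᵒᵖ {as} : Set R) ∧
    (TwoSidedIdeal.span {a} : Set R) = (Ideal.span {as} : Set R)

/-- The Komarnytsky condition: every factor of an invariant element is invariant. -/
def KomarnytskyCondition (R : Type*) [Ring R] : Prop :=
  ∀ a b c : R, InvariantElem a → a = b * c → InvariantElem b ∧ InvariantElem c

/-- Membership in the right span of a single element. -/
lemma mem_opSpan_singleton {R : Type*} [Ring R] {d x : R} :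
    x ∈ Submodule.span Rᵐᵒᵖ ({d} : Set R) ↔ ∃ r : R, d * r = x := by
  rw [Submodule.mem_span_singleton]
  constructor
  · rintro ⟨r, rfl⟩
    exact ⟨r.unop, rfl⟩
  · rintro ⟨r, rfl⟩
    exact ⟨MulOpposite.op r, rfl⟩

/-- If `d` is invariant, the left ideal `Rd` is a two-sided ideal; hence the
two-sided ideal generated by any of its elements is contained in it. -/
lemma twoSidedSpan_le_of_invariant {R : Type*} [Ring R] {d : R} (hd : InvariantElem d)
    {a : R} (had : a ∈ Ideal.span ({d} : Set R)) :
    (TwoSidedIdeal.span {a} : Set R) ⊆ (Ideal.span ({d} : Set R) : Set R) := by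
  intro x hx
  have key : ∀ {u v : R}, u ∈ Ideal.span ({d} : Set R) → u * v ∈ Ideal.span ({d} : Set R) := by
    intro u v hu
    have hu' : u ∈ (Submodule.span Rᵐᵒᵖ ({d} : Set R) : Set R) := by
      rw [hd]; exact hu
    obtain ⟨r, rfl⟩ := mem_opSpan_singleton.mp hu'
    have : d * (r * v) ∈ (Submodule.span Rᵐᵒᵖ ({d} : Set R) : Set R) :=
      mem_opSpan_singleton.mpr ⟨r * v, rfl⟩
    rw [hd] at this
    simpa [mul_assoc] using this
  let I : TwoSidedIdeal R := TwoSidedIdeal.mk' (Ideal.span ({d} : Set R))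
    (Submodule.zero_mem _) (fun h1 h2 => Submodule.add_mem _ h1 h2)
    (fun h => Submodule.neg_mem _ h)
    (fun {x y} h => Ideal.mul_mem_left _ x h)
    (fun {x y} h => key h)
  have hxI : x ∈ I := by
    rw [SetLike.mem_coe, TwoSidedIdeal.mem_span_iff] at hx
    exact hx I (by
      intro z hz
      rcases hz with rfl
      simpa [I, TwoSidedIdeal.mem_mk'] using had)
  simpa [I, TwoSidedIdeal.mem_mk'] using hxI

theorem twoSidedUnit_mul {R : Type*} [Ring R] [IsDomain R]
    (hB : IsBezout2 R) (hD : DubrovinCondition R) (hK : KomarnytskyCondition R)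
    (a b : R) (ha : (1 : R) ∈ TwoSidedIdeal.span {a})
    (hb : (1 : R) ∈ TwoSidedIdeal.span {b}) :
    (1 : R) ∈ TwoSidedIdeal.span {a * b} := by
  obtain ⟨c, hc1, hc2⟩ := hD (a * b)
  -- `c` is invariant
  have hcinv : InvariantElem c := by
    unfold InvariantElem
    rw [← hc1, ← hc2]
  -- `a * b ∈ Rc`
  have hab_mem : a * b ∈ Ideal.span ({c} : Set R) := by
    have : a * b ∈ (TwoSidedIdeal.span {a * b} : Set R) := TwoSidedIdeal.subset_span rfl
    rw [hc2] at this
    exact this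
  -- Bezout: `Ra + Rc = Rd`
  obtain ⟨d, hd⟩ := hB.2 (Ideal.span ({a, c} : Set R))
    (Submodule.fg_span (Set.toFinite _))
  have haD : a ∈ Ideal.span ({d} : Set R) := by
    rw [← hd]; exact Ideal.subset_span (by simp)
  have hcD : c ∈ Ideal.span ({d} : Set R) := by
    rw [← hd]; exact Ideal.subset_span (by simp)
  -- `c = x * d`, so `d` is invariant by Komarnytsky
  obtain ⟨x, hx⟩ := Submodule.mem_span_singleton.mp hcD
  have hdinv : InvariantElem d := (hK c x d hcinv (by rw [← hx]; rfl)).2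
  -- `1 ∈ Rd` since `Rd` is two-sided and contains `a`
  have h1d : (1 : R) ∈ Ideal.span ({d} : Set R) :=
    twoSidedSpan_le_of_invariant hdinv haD ha
  -- write `1 = p*a + q*c`
  have h1ac : (1 : R) ∈ Ideal.span ({a} : Set R) ⊔ Ideal.span ({c} : Set R) := by
    rw [← Ideal.span_union]
    have : ({a} : Set R) ∪ {c} = {a, c} := by ext; simp [or_comm]
    rw [this, hd]
    exact h1d
  obtain ⟨y, hy, z, hz, hyz⟩ := Submodule.mem_sup.mp h1ac
  obtain ⟨p, hp⟩ := Submodule.mem_span_singleton.mp hy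
  obtain ⟨q, hq⟩ := Submodule.mem_span_singleton.mp hz
  -- `c * b ∈ Rc`
  have hcb : c * b ∈ Ideal.span ({c} : Set R) := by
    have : c * b ∈ (Submodule.span Rᵐᵒᵖ ({c} : Set R) : Set R) :=
      mem_opSpan_singleton.mpr ⟨b, rfl⟩
    rw [hcinv] at this
    exact this
  -- `b = p*(a*b) + q*(c*b) ∈ Rc`
  have hbc : b ∈ Ideal.span ({c} : Set R) := by
    have : b = p * (a * b) + q * (c * b) := by
      have : (p • a + q • c) * b = b := by rw [hp, hq, hyz, one_mul]
      calc b = (p • a + q • c) * b := this.symm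
        _ = p * (a * b) + q * (c * b) := by
            simp [smul_eq_mul, add_mul, mul_assoc]
    rw [this]
    exact Submodule.add_mem _ (Ideal.mul_mem_left _ p hab_mem) (Ideal.mul_mem_left _ q hcb)
  -- `Rc` is two-sided and contains `b`, hence `1 ∈ Rc = span {a*b}`
  have h1c : (1 : R) ∈ Ideal.span ({c} : Set R) :=
    twoSidedSpan_le_of_invariant hcinv hbc hb
  have : (1 : R) ∈ (TwoSidedIdeal.span {a * b} : Set R) := by
    rw [hc2]; exact h1c
  exact this
end

section
/- Let R be a Bezout domain and let p, q, u, v ∈ R satisfy pR + qR = R and Ru + Rv = R. Then there exist invertible 2×2 matrices P and Q over R whose first row is (p, q) (for P) and whose first column is (u, v)ᵀ (for Q). -/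
open MulOpposite

lemma row_helper {R : Type*} [Ring R] [IsDomain R]
    (hB : ∀ I : Submodule Rᵐᵒᵖ R, I.FG → ∃ d : R, I = Submodule.span Rᵐᵒᵖ {d})
    (p q : R) (hpq : ∃ x y : R, p * x + q * y = 1) :
    ∃ P M : Matrix (Fin 2) (Fin 2) R, P * M = 1 ∧ M * P = 1 ∧ P 0 0 = p ∧ P 0 1 = q := by
  obtain ⟨x, y, h1⟩ := hpq
  by_cases hq : q = 0
  · subst hq
    rw [zero_mul, add_zero] at h1
    have hp : p ≠ 0 := by rintro rfl; rw [zero_mul] at h1; exact zero_ne_one h1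
    have hxp : x * p = 1 := by
      have := mul_left_cancel₀ hp (show p * (x * p) = p * 1 by
        rw [← mul_assoc, h1, one_mul, mul_one])
      exact this
    refine ⟨!![p, 0; 0, 1], !![x, 0; 0, 1], ?_, ?_, rfl, rfl⟩
    · rw [Matrix.mul_fin_two, Matrix.one_fin_two]; simp [h1]
    · rw [Matrix.mul_fin_two, Matrix.one_fin_two]; simp [hxp]
  · set I : Submodule Rᵐᵒᵖ R := Submodule.span Rᵐᵒᵖ {1 - x * p, x * q} with hI
    obtain ⟨c, hc⟩ := hB I (hI ▸ Submodule.fg_span (Set.toFinite _))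
    have hm1 : (1 - x * p) ∈ Submodule.span Rᵐᵒᵖ ({c} : Set R) := by
      rw [← hc]; exact Submodule.subset_span (by simp)
    have hm2 : (x * q) ∈ Submodule.span Rᵐᵒᵖ ({c} : Set R) := by
      rw [← hc]; exact Submodule.subset_span (by simp)
    obtain ⟨a1, ha1⟩ := Submodule.mem_span_singleton.mp hm1
    obtain ⟨a2, ha2⟩ := Submodule.mem_span_singleton.mp hm2
    set r₁ := a1.unop with hr₁
    set r₂ := a2.unop with hr₂
    have hr1 : c * r₁ = 1 - x * p := by
      rw [← ha1, ← MulOpposite.op_unop a1, op_smul_eq_mul]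
    have hr2 : c * r₂ = x * q := by
      rw [← ha2, ← MulOpposite.op_unop a2, op_smul_eq_mul]
    have hcmem : c ∈ I := by rw [hc]; exact Submodule.mem_span_singleton_self c
    obtain ⟨so, tt, hst⟩ := Submodule.mem_span_pair.mp hcmem
    set s := so.unop
    set t := tt.unop
    have hs : (1 - x * p) * s + (x * q) * t = c := by
      rw [← hst, ← MulOpposite.op_unop so, ← MulOpposite.op_unop tt,
        op_smul_eq_mul, op_smul_eq_mul]
    have hc0 : c ≠ 0 := by
      rintro rfl
      rw [zero_mul] at hr1 hr2
      have hxp : x * p = 1 := by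
        have := hr1.symm; rwa [sub_eq_zero, eq_comm] at this
      have hx0 : x ≠ 0 := by rintro rfl; rw [zero_mul] at hxp; exact zero_ne_one hxp
      rcases mul_eq_zero.mp hr2.symm with h | h
      · exact hx0 h
      · exact hq h
    set b : R := -(y * p) * s - (1 - y * q) * t with hb
    have hE2 : p * c + q * b = 0 := by
      calc p * c + q * b
          = p * ((1 - x * p) * s + (x * q) * t) + q * (-(y * p) * s - (1 - y * q) * t) := by
            rw [hs, hb]
        _ = (p - (p * x + q * y) * p) * s + ((p * x + q * y) * q - q) * t := by noncomm_ring
        _ = 0 := by rw [h1]; noncomm_ring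
    have hqb : q * b = -(p * c) := by
      rw [eq_neg_iff_add_eq_zero, add_comm]; exact hE2
    have hE3 : r₁ * x + -r₂ * y = 0 := by
      refine mul_left_cancel₀ hc0 ?_
      calc c * (r₁ * x + -r₂ * y)
          = (c * r₁) * x - (c * r₂) * y := by noncomm_ring
        _ = (1 - x * p) * x - (x * q) * y := by rw [hr1, hr2]
        _ = x - x * (p * x + q * y) := by noncomm_ring
        _ = c * 0 := by rw [h1]; noncomm_ring
    have hE4 : r₁ * c + -r₂ * b = 1 := by
      refine mul_left_cancel₀ hc0 ?_
      calc c * (r₁ * c + -r₂ * b)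
          = (c * r₁) * c - (c * r₂) * b := by noncomm_ring
        _ = (1 - x * p) * ((1 - x * p) * s + (x * q) * t)
              - (x * q) * (-(y * p) * s - (1 - y * q) * t) := by rw [hr1, hr2, hs, hb]
        _ = ((1 - x * p) - x * p + x * ((p * x + q * y) * p)) * s
              + (x * q + x * q - x * ((p * x + q * y) * q)) * t := by noncomm_ring
        _ = (1 - x * p) * s + (x * q) * t := by rw [h1]; noncomm_ring
        _ = c * 1 := by rw [hs, mul_one]
    have hE7 : y * p + b * r₁ = 0 := by
      refine mul_left_cancel₀ hq ?_
      calc q * (y * p + b * r₁)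
          = (q * y) * p + (q * b) * r₁ := by noncomm_ring
        _ = (q * y) * p + (-(p * c)) * r₁ := by rw [hqb]
        _ = (q * y) * p - p * (c * r₁) := by noncomm_ring
        _ = (q * y) * p - p * (1 - x * p) := by rw [hr1]
        _ = (p * x + q * y) * p - p := by noncomm_ring
        _ = q * 0 := by rw [h1]; noncomm_ring
    have hE8 : y * q + b * -r₂ = 1 := by
      refine mul_left_cancel₀ hq ?_
      calc q * (y * q + b * -r₂)
          = (q * y) * q - (q * b) * r₂ := by noncomm_ring
        _ = (q * y) * q - (-(p * c)) * r₂ := by rw [hqb]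
        _ = (q * y) * q + p * (c * r₂) := by noncomm_ring
        _ = (q * y) * q + p * (x * q) := by rw [hr2]
        _ = (p * x + q * y) * q := by noncomm_ring
        _ = q * 1 := by rw [h1, one_mul, mul_one]
    refine ⟨!![p, q; r₁, -r₂], !![x, c; y, b], ?_, ?_, rfl, rfl⟩
    · rw [Matrix.mul_fin_two, Matrix.one_fin_two, h1, hE2, hE3, hE4]
    · rw [Matrix.mul_fin_two, Matrix.one_fin_two]
      have e11 : x * p + c * r₁ = 1 := by rw [hr1]; noncomm_ring
      have e12 : x * q + c * -r₂ = 0 := by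
        rw [show c * -r₂ = -(c * r₂) by noncomm_ring, hr2, add_neg_cancel]
      rw [e11, e12, hE7, hE8]


lemma col_helper {R : Type*} [Ring R] [IsDomain R]
    (hB : ∀ I : Ideal R, I.FG → ∃ d : R, I = Ideal.span {d})
    (u v : R) (huv : ∃ x y : R, x * u + y * v = 1) :
    ∃ Q N : Matrix (Fin 2) (Fin 2) R, Q * N = 1 ∧ N * Q = 1 ∧ Q 0 0 = u ∧ Q 1 0 = v := by
  obtain ⟨x, y, h1⟩ := huv
  by_cases hv : v = 0
  · subst hv
    rw [mul_zero, add_zero] at h1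
    have hu : u ≠ 0 := by rintro rfl; rw [mul_zero] at h1; exact zero_ne_one h1
    have hux : u * x = 1 := by
      exact mul_right_cancel₀ hu (show (u * x) * u = 1 * u by
        rw [mul_assoc, h1, mul_one, one_mul])
    refine ⟨!![u, 0; 0, 1], !![x, 0; 0, 1], ?_, ?_, rfl, rfl⟩
    · rw [Matrix.mul_fin_two, Matrix.one_fin_two]; simp [hux]
    · rw [Matrix.mul_fin_two, Matrix.one_fin_two]; simp [h1]
  · set J : Ideal R := Ideal.span {1 - u * x, v * x} with hJ
    obtain ⟨c, hc⟩ := hB J (hJ ▸ Submodule.fg_span (Set.toFinite _))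
    have hm1 : (1 - u * x) ∈ Ideal.span ({c} : Set R) := by
      rw [← hc]; exact Submodule.subset_span (by simp)
    have hm2 : (v * x) ∈ Ideal.span ({c} : Set R) := by
      rw [← hc]; exact Submodule.subset_span (by simp)
    obtain ⟨r₁, hr1⟩ := Ideal.mem_span_singleton'.mp hm1
    obtain ⟨r₂, hr2⟩ := Ideal.mem_span_singleton'.mp hm2
    have hcmem : c ∈ J := by rw [hc]; exact Submodule.mem_span_singleton_self c
    obtain ⟨s, t, hst⟩ := Submodule.mem_span_pair.mp hcmem
    have hs : s * (1 - u * x) + t * (v * x) = c := by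
      simpa [smul_eq_mul] using hst
    have hc0 : c ≠ 0 := by
      rintro rfl
      rw [mul_zero] at hr1 hr2
      have hux : u * x = 1 := by
        have := hr1.symm; rwa [sub_eq_zero, eq_comm] at this
      have hx0 : x ≠ 0 := by rintro rfl; rw [mul_zero] at hux; exact zero_ne_one hux
      rcases mul_eq_zero.mp hr2.symm with h | h
      · exact hv h
      · exact hx0 h
    set b : R := -s * (u * y) - t * (1 - v * y) with hb
    have hE2 : c * u + b * v = 0 := by
      calc c * u + b * v
          = (s * (1 - u * x) + t * (v * x)) * u + (-s * (u * y) - t * (1 - v * y)) * v := by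
            rw [hs, hb]
        _ = s * (u - u * (x * u + y * v)) + t * (v * (x * u + y * v) - v) := by noncomm_ring
        _ = 0 := by rw [h1]; noncomm_ring
    have hbv : b * v = -(c * u) := by
      rw [eq_neg_iff_add_eq_zero, add_comm]; exact hE2
    have hE3 : x * r₁ + y * -r₂ = 0 := by
      refine mul_right_cancel₀ hc0 ?_
      calc (x * r₁ + y * -r₂) * c
          = x * (r₁ * c) - y * (r₂ * c) := by noncomm_ring
        _ = x * (1 - u * x) - y * (v * x) := by rw [hr1, hr2]
        _ = x - (x * u + y * v) * x := by noncomm_ring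
        _ = 0 * c := by rw [h1]; noncomm_ring
    have hE4 : c * r₁ + b * -r₂ = 1 := by
      refine mul_right_cancel₀ hc0 ?_
      calc (c * r₁ + b * -r₂) * c
          = c * (r₁ * c) - b * (r₂ * c) := by noncomm_ring
        _ = (s * (1 - u * x) + t * (v * x)) * (1 - u * x)
              - (-s * (u * y) - t * (1 - v * y)) * (v * x) := by rw [hr1, hr2, hs, hb]
        _ = s * ((1 - u * x) - u * x + u * ((x * u + y * v) * x))
              + t * (v * x + v * x - v * ((x * u + y * v) * x)) := by noncomm_ring
        _ = s * (1 - u * x) + t * (v * x) := by rw [h1]; noncomm_ring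
        _ = 1 * c := by rw [hs, one_mul]
    have hE7 : u * y + r₁ * b = 0 := by
      refine mul_right_cancel₀ hv ?_
      calc (u * y + r₁ * b) * v
          = u * (y * v) + r₁ * (b * v) := by noncomm_ring
        _ = u * (y * v) + r₁ * (-(c * u)) := by rw [hbv]
        _ = u * (y * v) - (r₁ * c) * u := by noncomm_ring
        _ = u * (y * v) - (1 - u * x) * u := by rw [hr1]
        _ = u * (x * u + y * v) - u := by noncomm_ring
        _ = 0 * v := by rw [h1]; noncomm_ring
    have hE8 : v * y + -r₂ * b = 1 := by
      refine mul_right_cancel₀ hv ?_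
      calc (v * y + -r₂ * b) * v
          = v * (y * v) - r₂ * (b * v) := by noncomm_ring
        _ = v * (y * v) - r₂ * (-(c * u)) := by rw [hbv]
        _ = v * (y * v) + (r₂ * c) * u := by noncomm_ring
        _ = v * (y * v) + (v * x) * u := by rw [hr2]
        _ = v * (x * u + y * v) := by noncomm_ring
        _ = 1 * v := by rw [h1, mul_one, one_mul]
    refine ⟨!![u, r₁; v, -r₂], !![x, y; c, b], ?_, ?_, rfl, rfl⟩
    · rw [Matrix.mul_fin_two, Matrix.one_fin_two]
      have e11 : u * x + r₁ * c = 1 := by rw [hr1]; noncomm_ring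
      have e21 : v * x + -r₂ * c = 0 := by
        rw [show -r₂ * c = -(r₂ * c) by noncomm_ring, hr2, add_neg_cancel]
      rw [e11, e21, hE7, hE8]
    · rw [Matrix.mul_fin_two, Matrix.one_fin_two, h1, hE2, hE3, hE4]


theorem exists_unit_matrices_of_unimodular {R : Type*} [Ring R] [IsDomain R]
    (hB : IsBezout2 R) (p q u v : R)
    (hpq : ∃ x y : R, p * x + q * y = 1)
    (huv : ∃ x y : R, x * u + y * v = 1) :
    ∃ P Q : Matrix (Fin 2) (Fin 2) R, IsUnit P ∧ IsUnit Q ∧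
      P 0 0 = p ∧ P 0 1 = q ∧ Q 0 0 = u ∧ Q 1 0 = v := by
  obtain ⟨P, M, hPM, hMP, hP1, hP2⟩ := row_helper hB.1 p q hpq
  obtain ⟨Q, N, hQN, hNQ, hQ1, hQ2⟩ := col_helper hB.2 u v huv
  exact ⟨P, Q, isUnit_iff_exists.mpr ⟨M, hPM, hMP⟩,
    isUnit_iff_exists.mpr ⟨N, hQN, hNQ⟩, hP1, hP2, hQ1, hQ2⟩
end

section
/- Let R be a Bezout domain of simple range 2. Then any 2×2 matrix A = [[a, c], [b, 0]] with c ≠ 0 and RaR + RbR + RcR = R is equivalent (i.e., there exist invertible matrices P, Q with PAQ = X) to a matrix X whose (1,1) entry x satisfies RxR = R. -/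
section Aux

variable {R : Type*} [Ring R]

private lemma bez_right' (hB : IsBezout2 R) (x y : R) :
    ∃ d x' y' γ δ : R, x = d * x' ∧ y = d * y' ∧ x * γ + y * δ = d := by
  obtain ⟨d, hd⟩ := hB.1 (Submodule.span Rᵐᵒᵖ {x, y})
    (Submodule.fg_span ((Set.finite_singleton y).insert x))
  have hx : x ∈ Submodule.span Rᵐᵒᵖ ({x, y} : Set R) := Submodule.subset_span (by simp)
  have hy : y ∈ Submodule.span Rᵐᵒᵖ ({x, y} : Set R) := Submodule.subset_span (by simp)
  rw [hd] at hx hy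
  obtain ⟨x', hx'⟩ := Submodule.mem_span_singleton.mp hx
  obtain ⟨y', hy'⟩ := Submodule.mem_span_singleton.mp hy
  have hdm : d ∈ Submodule.span Rᵐᵒᵖ ({x, y} : Set R) := by
    rw [hd]; exact Submodule.mem_span_singleton_self d
  obtain ⟨γ, δ, hγδ⟩ := Submodule.mem_span_pair.mp hdm
  refine ⟨d, x'.unop, y'.unop, γ.unop, δ.unop, ?_, ?_, ?_⟩
  · rw [← hx']; rfl
  · rw [← hy']; rfl
  · rw [← hγδ]; rfl

private lemma bez_left' (hB : IsBezout2 R) (x y : R) :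
    ∃ d x' y' γ δ : R, x = x' * d ∧ y = y' * d ∧ γ * x + δ * y = d := by
  obtain ⟨d, hd⟩ := hB.2 (Ideal.span {x, y})
    (Submodule.fg_span ((Set.finite_singleton y).insert x))
  have hx : x ∈ Ideal.span ({x, y} : Set R) := Ideal.subset_span (by simp)
  have hy : y ∈ Ideal.span ({x, y} : Set R) := Ideal.subset_span (by simp)
  rw [hd] at hx hy
  obtain ⟨x', hx'⟩ := Ideal.mem_span_singleton'.mp hx
  obtain ⟨y', hy'⟩ := Ideal.mem_span_singleton'.mp hy
  have hdm : d ∈ Ideal.span ({x, y} : Set R) := by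
    rw [hd]; exact Ideal.subset_span rfl
  obtain ⟨γ, δ, hγδ⟩ := Ideal.mem_span_pair.mp hdm
  exact ⟨d, x', y', γ, δ, hx'.symm, hy'.symm, hγδ⟩

private lemma one_mem_span_of (s : Set R) {t : Set R} (h1 : (1 : R) ∈ TwoSidedIdeal.span s)
    (hsub : ∀ z ∈ s, z ∈ TwoSidedIdeal.span t) : (1 : R) ∈ TwoSidedIdeal.span t :=
  TwoSidedIdeal.mem_span_iff.mp h1 _ hsub

variable [IsDomain R]

private lemma idem01 {e : R} (he : e * e = e) : e = 0 ∨ e = 1 := by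
  have h0 : e * (e - 1) = 0 := by rw [mul_sub, he, mul_one, sub_self]
  rcases mul_eq_zero.mp h0 with h | h
  · exact Or.inl h
  · exact Or.inr (by rwa [sub_eq_zero] at h)

private lemma complete_row (hB : IsBezout2 R) {p q r s : R} (h : p * r + q * s = 1) :
    ∃ M : Matrix (Fin 2) (Fin 2) R, IsUnit M ∧ M 0 0 = p ∧ M 0 1 = q := by
  by_cases hp : p = 0
  · subst hp
    rw [zero_mul, zero_add] at h
    have hsq : s * q = 1 := by
      have hi : (s * q) * (s * q) = s * q := by
        calc (s*q)*(s*q) = s * ((q*s) * q) := by noncomm_ring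
        _ = s * q := by rw [h, one_mul]
      rcases idem01 hi with h0 | h1
      · exfalso
        rcases mul_eq_zero.mp h0 with hs | hq
        · rw [hs, mul_zero] at h; exact one_ne_zero h.symm
        · rw [hq, zero_mul] at h; exact one_ne_zero h.symm
      · exact h1
    refine ⟨!![0, q; 1, 0], ⟨⟨!![0, q; 1, 0], !![0, 1; s, 0], ?_, ?_⟩, rfl⟩, by simp, by simp⟩
    · ext i j
      fin_cases i <;> fin_cases j <;>
        simp [Matrix.mul_apply, Fin.sum_univ_two, Matrix.one_apply, h, hsq]
    · ext i j
      fin_cases i <;> fin_cases j <;>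
        simp [Matrix.mul_apply, Fin.sum_univ_two, Matrix.one_apply, h, hsq]
  · obtain ⟨g, a₁, a₂, γ, δ, hga1, hga2, hg⟩ := bez_right' hB (-(s*p)) (1 - s*q)
    set h₁ : R := (1 - r*p)*γ + (-(r*q))*δ with hh₁
    obtain ⟨m, b₁, b₂, γ', δ', hf1, hf2, hm⟩ :=
      bez_right' hB ((1 - r*p) - h₁*a₁) ((-(r*q)) - h₁*a₂)
    have pe1 : p*(1 - r*p) + q*(-(s*p)) = 0 := by
      have e : p*(1 - r*p) + q*(-(s*p)) = -(((p*r + q*s) - 1) * p) := by noncomm_ring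
      rw [e, h, sub_self, zero_mul, neg_zero]
    have pe2 : p*(-(r*q)) + q*(1 - s*q) = 0 := by
      have e : p*(-(r*q)) + q*(1 - s*q) = -(((p*r + q*s) - 1) * q) := by noncomm_ring
      rw [e, h, sub_self, zero_mul, neg_zero]
    have phq : p*h₁ + q*g = 0 := by
      have e : p*h₁ + q*((-(s*p))*γ + (1 - s*q)*δ) =
          (p*(1 - r*p) + q*(-(s*p)))*γ + (p*(-(r*q)) + q*(1 - s*q))*δ := by
        rw [hh₁]; noncomm_ring
      rw [← hg, e, pe1, pe2, zero_mul, zero_mul, add_zero]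
    have pf1 : p*((1 - r*p) - h₁*a₁) = 0 := by
      have e : p*((1 - r*p) - h₁*a₁) =
          (p*(1 - r*p) + q*(-(s*p))) - (p*h₁ + q*g)*a₁ + q*((g*a₁) - (-(s*p))) := by
        noncomm_ring
      rw [e, ← hga1, pe1, phq, zero_mul]
      simp
    have pf2 : p*((-(r*q)) - h₁*a₂) = 0 := by
      have e : p*((-(r*q)) - h₁*a₂) =
          (p*(-(r*q)) + q*(1 - s*q)) - (p*h₁ + q*g)*a₂ + q*((g*a₂) - (1 - s*q)) := by
        noncomm_ring
      rw [e, ← hga2, pe2, phq, zero_mul]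
      simp
    have pm : p * m = 0 := by
      have e : p * (((1 - r*p) - h₁*a₁)*γ' + ((-(r*q)) - h₁*a₂)*δ') =
          (p*((1 - r*p) - h₁*a₁))*γ' + (p*((-(r*q)) - h₁*a₂))*δ' := by noncomm_ring
      rw [← hm, e, pf1, pf2, zero_mul, zero_mul, add_zero]
    have hm0 : m = 0 := (mul_eq_zero.mp pm).resolve_left hp
    rw [hm0, zero_mul] at hf1 hf2
    have E11 : h₁*a₁ = 1 - r*p := (sub_eq_zero.mp hf1).symm
    have E12 : h₁*a₂ = -(r*q) := (sub_eq_zero.mp hf2).symm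
    have E21 : g*a₁ = -(s*p) := hga1.symm
    have E22 : g*a₂ = 1 - s*q := hga2.symm
    have hne : ¬((1 - r*p) = 0 ∧ -(r*q) = 0 ∧ -(s*p) = 0 ∧ (1 - s*q) = 0) := by
      rintro ⟨z1, z2, z3, z4⟩
      have hrp : r * p = 1 := by rw [sub_eq_zero] at z1; exact z1.symm
      have hrq : r * q = 0 := by simpa using z2
      have hsq : s * q = 1 := by rw [sub_eq_zero] at z4; exact z4.symm
      have hr : r ≠ 0 := by
        intro h0; rw [h0, zero_mul] at hrp; exact one_ne_zero hrp.symm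
      have hq : q = 0 := (mul_eq_zero.mp hrq).resolve_left hr
      rw [hq, mul_zero] at hsq; exact one_ne_zero hsq.symm
    have h4 : (1 - r*p) ≠ 0 ∨ -(r*q) ≠ 0 ∨ -(s*p) ≠ 0 ∨ (1 - s*q) ≠ 0 := by
      by_contra h'
      push_neg at h'
      exact hne ⟨h'.1, h'.2.1, h'.2.2.1, h'.2.2.2⟩
    -- uniform sub-proofs
    have tw1 : h₁ ≠ 0 → a₁*r + a₂*s = 0 := by
      intro hw
      have t1 : h₁ * (a₁*r + a₂*s) = h₁ * 0 := by
        have e : h₁*(a₁*r + a₂*s) = (h₁*a₁)*r + (h₁*a₂)*s := by noncomm_ring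
        rw [e, E11, E12]
        have e2 : (1 - r*p)*r + (-(r*q))*s = -(r*((p*r + q*s) - 1)) := by noncomm_ring
        rw [e2, h, sub_self, mul_zero, neg_zero, mul_zero]
      exact mul_left_cancel₀ hw t1
    have tw2 : g ≠ 0 → a₁*r + a₂*s = 0 := by
      intro hw
      have t1 : g * (a₁*r + a₂*s) = g * 0 := by
        have e : g*(a₁*r + a₂*s) = (g*a₁)*r + (g*a₂)*s := by noncomm_ring
        rw [e, E21, E22]
        have e2 : (-(s*p))*r + (1 - s*q)*s = -(s*((p*r + q*s) - 1)) := by noncomm_ring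
        rw [e2, h, sub_self, mul_zero, neg_zero, mul_zero]
      exact mul_left_cancel₀ hw t1
    have key : ∀ wi tj ei1 ei2 e1j e2j eij : R, wi ≠ 0 → tj ≠ 0 →
        wi*a₁ = ei1 → wi*a₂ = ei2 → h₁*tj = e1j → g*tj = e2j → wi*tj = eij →
        (ei1*e1j + ei2*e2j = eij) → a₁*h₁ + a₂*g = 1 := by
      intro wi tj ei1 ei2 e1j e2j eij hw ht hE1 hE2 hF1 hF2 hE hid
      have u1 : wi * ((a₁*h₁ + a₂*g) * tj) = wi * tj := by
        have e : wi*((a₁*h₁ + a₂*g)*tj) = (wi*a₁)*(h₁*tj) + (wi*a₂)*(g*tj) := by noncomm_ring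
        rw [e, hE1, hE2, hF1, hF2, hid, hE]
      have u2 : (a₁*h₁ + a₂*g) * tj = tj := mul_left_cancel₀ hw u1
      have u3 : (a₁*h₁ + a₂*g) * tj = 1 * tj := by rw [u2, one_mul]
      exact mul_right_cancel₀ ht u3
    have main : a₁*r + a₂*s = 0 ∧ a₁*h₁ + a₂*g = 1 := by
      rcases h4 with hz | hz | hz | hz
      · rw [← E11] at hz
        refine ⟨tw1 (left_ne_zero_of_mul hz), key h₁ a₁ _ _ _ _ _
          (left_ne_zero_of_mul hz) (right_ne_zero_of_mul hz) E11 E12 E11 E21 E11 ?_⟩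
        exact sub_eq_zero.mp (by
          rw [show (1 - r*p)*(1 - r*p) + (-(r*q))*(-(s*p)) - (1 - r*p)
              = r*((p*r + q*s) - 1)*p from by noncomm_ring, h, sub_self, mul_zero, zero_mul])
      · rw [← E12] at hz
        refine ⟨tw1 (left_ne_zero_of_mul hz), key h₁ a₂ _ _ _ _ _
          (left_ne_zero_of_mul hz) (right_ne_zero_of_mul hz) E11 E12 E12 E22 E12 ?_⟩
        exact sub_eq_zero.mp (by
          rw [show (1 - r*p)*(-(r*q)) + (-(r*q))*(1 - s*q) - (-(r*q))
              = r*((p*r + q*s) - 1)*q from by noncomm_ring, h, sub_self, mul_zero, zero_mul])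
      · rw [← E21] at hz
        refine ⟨tw2 (left_ne_zero_of_mul hz), key g a₁ _ _ _ _ _
          (left_ne_zero_of_mul hz) (right_ne_zero_of_mul hz) E21 E22 E11 E21 E21 ?_⟩
        exact sub_eq_zero.mp (by
          rw [show (-(s*p))*(1 - r*p) + (1 - s*q)*(-(s*p)) - (-(s*p))
              = s*((p*r + q*s) - 1)*p from by noncomm_ring, h, sub_self, mul_zero, zero_mul])
      · rw [← E22] at hz
        refine ⟨tw2 (left_ne_zero_of_mul hz), key g a₂ _ _ _ _ _
          (left_ne_zero_of_mul hz) (right_ne_zero_of_mul hz) E21 E22 E12 E22 E22 ?_⟩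
        exact sub_eq_zero.mp (by
          rw [show (-(s*p))*(-(r*q)) + (1 - s*q)*(1 - s*q) - (1 - s*q)
              = s*((p*r + q*s) - 1)*q from by noncomm_ring, h, sub_self, mul_zero, zero_mul])
    obtain ⟨tw0, c1⟩ := main
    refine ⟨!![p, q; a₁, a₂], ⟨⟨!![p, q; a₁, a₂], !![r, h₁; s, g], ?_, ?_⟩, rfl⟩, by simp, by simp⟩
    · ext i j
      fin_cases i <;> fin_cases j <;>
        simp [Matrix.mul_apply, Fin.sum_univ_two, Matrix.one_apply, h, phq, tw0, c1]
    · ext i j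
      fin_cases i <;> fin_cases j <;>
        simp [Matrix.mul_apply, Fin.sum_univ_two, Matrix.one_apply, E11, E12, E21, E22]

private lemma complete_col (hB : IsBezout2 R) {p q r s : R} (h : r * p + s * q = 1) :
    ∃ M : Matrix (Fin 2) (Fin 2) R, IsUnit M ∧ M 0 0 = p ∧ M 1 0 = q := by
  by_cases hp : p = 0
  · subst hp
    rw [mul_zero, zero_add] at h
    have hqs : q * s = 1 := by
      have hi : (q * s) * (q * s) = q * s := by
        calc (q*s)*(q*s) = q * ((s*q) * s) := by noncomm_ring
        _ = q * s := by rw [h, one_mul]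
      rcases idem01 hi with h0 | h1
      · exfalso
        rcases mul_eq_zero.mp h0 with hq | hs
        · rw [hq, mul_zero] at h; exact one_ne_zero h.symm
        · rw [hs, zero_mul] at h; exact one_ne_zero h.symm
      · exact h1
    refine ⟨!![0, 1; q, 0], ⟨⟨!![0, 1; q, 0], !![0, s; 1, 0], ?_, ?_⟩, rfl⟩, by simp, by simp⟩
    · ext i j
      fin_cases i <;> fin_cases j <;>
        simp [Matrix.mul_apply, Fin.sum_univ_two, Matrix.one_apply, h, hqs]
    · ext i j
      fin_cases i <;> fin_cases j <;>
        simp [Matrix.mul_apply, Fin.sum_univ_two, Matrix.one_apply, h, hqs]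
  · obtain ⟨g, a₁, a₂, γ, δ, hga1, hga2, hg⟩ := bez_left' hB (-(p*s)) (1 - q*s)
    set h₁ : R := γ*(1 - p*r) + δ*(-(q*r)) with hh₁
    obtain ⟨m, b₁, b₂, γ', δ', hf1, hf2, hm⟩ :=
      bez_left' hB ((1 - p*r) - a₁*h₁) ((-(q*r)) - a₂*h₁)
    have pe1 : (1 - p*r)*p + (-(p*s))*q = 0 := by
      have e : (1 - p*r)*p + (-(p*s))*q = -(p * ((r*p + s*q) - 1)) := by noncomm_ring
      rw [e, h, sub_self, mul_zero, neg_zero]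
    have pe2 : (-(q*r))*p + (1 - q*s)*q = 0 := by
      have e : (-(q*r))*p + (1 - q*s)*q = -(q * ((r*p + s*q) - 1)) := by noncomm_ring
      rw [e, h, sub_self, mul_zero, neg_zero]
    have phq : h₁*p + g*q = 0 := by
      have e : h₁*p + (γ*(-(p*s)) + δ*(1 - q*s))*q =
          γ*((1 - p*r)*p + (-(p*s))*q) + δ*((-(q*r))*p + (1 - q*s)*q) := by
        rw [hh₁]; noncomm_ring
      rw [← hg, e, pe1, pe2, mul_zero, mul_zero, add_zero]
    have pf1 : ((1 - p*r) - a₁*h₁)*p = 0 := by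
      have e : ((1 - p*r) - a₁*h₁)*p =
          ((1 - p*r)*p + (-(p*s))*q) - a₁*(h₁*p + g*q) + ((a₁*g) - (-(p*s)))*q := by
        noncomm_ring
      rw [e, ← hga1, pe1, phq, mul_zero]
      simp
    have pf2 : ((-(q*r)) - a₂*h₁)*p = 0 := by
      have e : ((-(q*r)) - a₂*h₁)*p =
          ((-(q*r))*p + (1 - q*s)*q) - a₂*(h₁*p + g*q) + ((a₂*g) - (1 - q*s))*q := by
        noncomm_ring
      rw [e, ← hga2, pe2, phq, mul_zero]
      simp
    have pm : m * p = 0 := by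
      have e : (γ'*((1 - p*r) - a₁*h₁) + δ'*((-(q*r)) - a₂*h₁)) * p =
          γ'*(((1 - p*r) - a₁*h₁)*p) + δ'*(((-(q*r)) - a₂*h₁)*p) := by noncomm_ring
      rw [← hm, e, pf1, pf2, mul_zero, mul_zero, add_zero]
    have hm0 : m = 0 := (mul_eq_zero.mp pm).resolve_right hp
    rw [hm0, mul_zero] at hf1 hf2
    have E11 : a₁*h₁ = 1 - p*r := (sub_eq_zero.mp hf1).symm
    have E12 : a₁*g = -(p*s) := hga1.symm
    have E21 : a₂*h₁ = -(q*r) := (sub_eq_zero.mp hf2).symm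
    have E22 : a₂*g = 1 - q*s := hga2.symm
    have hne : ¬((1 - p*r) = 0 ∧ -(p*s) = 0 ∧ -(q*r) = 0 ∧ (1 - q*s) = 0) := by
      rintro ⟨z1, z2, z3, z4⟩
      have hps : p * s = 0 := by simpa using z2
      have hqs : q * s = 1 := by rw [sub_eq_zero] at z4; exact z4.symm
      have hs : s = 0 := (mul_eq_zero.mp hps).resolve_left hp
      rw [hs, mul_zero] at hqs; exact one_ne_zero hqs.symm
    have h4 : (1 - p*r) ≠ 0 ∨ -(p*s) ≠ 0 ∨ -(q*r) ≠ 0 ∨ (1 - q*s) ≠ 0 := by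
      by_contra h'
      push_neg at h'
      exact hne ⟨h'.1, h'.2.1, h'.2.2.1, h'.2.2.2⟩
    have tw1 : h₁ ≠ 0 → r*a₁ + s*a₂ = 0 := by
      intro hw
      have t1 : (r*a₁ + s*a₂) * h₁ = 0 * h₁ := by
        have e : (r*a₁ + s*a₂)*h₁ = r*(a₁*h₁) + s*(a₂*h₁) := by noncomm_ring
        rw [e, E11, E21]
        have e2 : r*(1 - p*r) + s*(-(q*r)) = -(((r*p + s*q) - 1)*r) := by noncomm_ring
        rw [e2, h, sub_self, zero_mul, neg_zero, zero_mul]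
      exact mul_right_cancel₀ hw t1
    have tw2 : g ≠ 0 → r*a₁ + s*a₂ = 0 := by
      intro hw
      have t1 : (r*a₁ + s*a₂) * g = 0 * g := by
        have e : (r*a₁ + s*a₂)*g = r*(a₁*g) + s*(a₂*g) := by noncomm_ring
        rw [e, E12, E22]
        have e2 : r*(-(p*s)) + s*(1 - q*s) = -(((r*p + s*q) - 1)*s) := by noncomm_ring
        rw [e2, h, sub_self, zero_mul, neg_zero, zero_mul]
      exact mul_right_cancel₀ hw t1
    have key : ∀ ai hj e1j e2j ei1 ei2 eij : R, ai ≠ 0 → hj ≠ 0 →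
        a₁*hj = e1j → a₂*hj = e2j → ai*h₁ = ei1 → ai*g = ei2 → ai*hj = eij →
        (ei1*e1j + ei2*e2j = eij) → h₁*a₁ + g*a₂ = 1 := by
      intro ai hj e1j e2j ei1 ei2 eij ha hh hE1 hE2 hF1 hF2 hE hid
      have u1 : ai * ((h₁*a₁ + g*a₂) * hj) = ai * hj := by
        have e : ai*((h₁*a₁ + g*a₂)*hj) = (ai*h₁)*(a₁*hj) + (ai*g)*(a₂*hj) := by noncomm_ring
        rw [e, hE1, hE2, hF1, hF2, hid, hE]
      have u2 : (h₁*a₁ + g*a₂) * hj = hj := mul_left_cancel₀ ha u1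
      have u3 : (h₁*a₁ + g*a₂) * hj = 1 * hj := by rw [u2, one_mul]
      exact mul_right_cancel₀ hh u3
    have main : r*a₁ + s*a₂ = 0 ∧ h₁*a₁ + g*a₂ = 1 := by
      rcases h4 with hz | hz | hz | hz
      · rw [← E11] at hz
        refine ⟨tw1 (right_ne_zero_of_mul hz), key a₁ h₁ _ _ _ _ _
          (left_ne_zero_of_mul hz) (right_ne_zero_of_mul hz) E11 E21 E11 E12 E11 ?_⟩
        exact sub_eq_zero.mp (by
          rw [show (1 - p*r)*(1 - p*r) + (-(p*s))*(-(q*r)) - (1 - p*r)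
              = p*((r*p + s*q) - 1)*r from by noncomm_ring, h, sub_self, mul_zero, zero_mul])
      · rw [← E12] at hz
        refine ⟨tw2 (right_ne_zero_of_mul hz), key a₁ g _ _ _ _ _
          (left_ne_zero_of_mul hz) (right_ne_zero_of_mul hz) E12 E22 E11 E12 E12 ?_⟩
        exact sub_eq_zero.mp (by
          rw [show (1 - p*r)*(-(p*s)) + (-(p*s))*(1 - q*s) - (-(p*s))
              = p*((r*p + s*q) - 1)*s from by noncomm_ring, h, sub_self, mul_zero, zero_mul])
      · rw [← E21] at hz
        refine ⟨tw1 (right_ne_zero_of_mul hz), key a₂ h₁ _ _ _ _ _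
          (left_ne_zero_of_mul hz) (right_ne_zero_of_mul hz) E11 E21 E21 E22 E21 ?_⟩
        exact sub_eq_zero.mp (by
          rw [show (-(q*r))*(1 - p*r) + (1 - q*s)*(-(q*r)) - (-(q*r))
              = q*((r*p + s*q) - 1)*r from by noncomm_ring, h, sub_self, mul_zero, zero_mul])
      · rw [← E22] at hz
        refine ⟨tw2 (right_ne_zero_of_mul hz), key a₂ g _ _ _ _ _
          (left_ne_zero_of_mul hz) (right_ne_zero_of_mul hz) E12 E22 E21 E22 E22 ?_⟩
        exact sub_eq_zero.mp (by
          rw [show (-(q*r))*(-(p*s)) + (1 - q*s)*(1 - q*s) - (1 - q*s)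
              = q*((r*p + s*q) - 1)*s from by noncomm_ring, h, sub_self, mul_zero, zero_mul])
    obtain ⟨tw0, c1⟩ := main
    refine ⟨!![p, a₁; q, a₂], ⟨⟨!![p, a₁; q, a₂], !![r, s; h₁, g], ?_, ?_⟩, rfl⟩, by simp, by simp⟩
    · ext i j
      fin_cases i <;> fin_cases j <;>
        simp [Matrix.mul_apply, Fin.sum_univ_two, Matrix.one_apply, E11, E12, E21, E22]
    · ext i j
      fin_cases i <;> fin_cases j <;>
        simp [Matrix.mul_apply, Fin.sum_univ_two, Matrix.one_apply, h, phq, tw0, c1]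

end Aux

theorem matrix_equiv_of_simpleRange2 {R : Type*} [Ring R] [IsDomain R]
    (hB : IsBezout2 R) (hS : SimpleRange2 R) (a b c : R) (hc : c ≠ 0)
    (habc : (1 : R) ∈ TwoSidedIdeal.span {a, b, c}) :
    ∃ P Q : Matrix (Fin 2) (Fin 2) R, IsUnit P ∧ IsUnit Q ∧
      (1 : R) ∈ TwoSidedIdeal.span {(P * Matrix.of ![![a, c], ![b, 0]] * Q) 0 0} := by
  obtain ⟨p, q, hpq⟩ := hS a b c hc habc
  obtain ⟨d, p', q', γ, δ, hp, hq, hd⟩ := bez_right' hB p q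
  have hd0 : d ≠ 0 := by
    rintro rfl
    rw [zero_mul] at hp hq
    rw [hp, hq] at hpq
    have h1 : (1 : R) ∈ (⊥ : TwoSidedIdeal R) := by
      refine TwoSidedIdeal.mem_span_iff.mp hpq ⊥ ?_
      intro z hz
      simp only [Set.mem_insert_iff, Set.mem_singleton_iff] at hz
      rcases hz with rfl | rfl
      · show 0 * a + 0 * b = 0; simp
      · show 0 * c = 0; simp
    have : (1 : R) = 0 := h1
    exact one_ne_zero this
  have hunim : p' * γ + q' * δ = 1 := by
    have t : d * (p' * γ + q' * δ) = p * γ + q * δ := by rw [hp, hq]; noncomm_ring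
    rw [hd] at t
    exact mul_left_cancel₀ hd0 (t.trans (mul_one d).symm)
  have hpq2 : (1 : R) ∈ TwoSidedIdeal.span {p' * a + q' * b, p' * c} := by
    refine one_mem_span_of _ hpq ?_
    intro z hz
    simp only [Set.mem_insert_iff, Set.mem_singleton_iff] at hz
    rcases hz with rfl | rfl
    · have t : p * a + q * b = d * (p' * a + q' * b) := by rw [hp, hq]; noncomm_ring
      rw [t]
      exact TwoSidedIdeal.mul_mem_left _ _ _ (TwoSidedIdeal.subset_span (by simp))
    · have t : p * c = d * (p' * c) := by rw [hp]; noncomm_ring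
      rw [t]
      exact TwoSidedIdeal.mul_mem_left _ _ _ (TwoSidedIdeal.subset_span (by simp))
  obtain ⟨d₂, u₁, v₁, γ₂, δ₂, hu, hv, hd₂⟩ := bez_right' hB (p' * a + q' * b) (p' * c)
  have h1d₂ : (1 : R) ∈ TwoSidedIdeal.span {d₂} := by
    refine one_mem_span_of _ hpq2 ?_
    intro z hz
    simp only [Set.mem_insert_iff, Set.mem_singleton_iff] at hz
    rcases hz with rfl | rfl
    · rw [hu]
      exact TwoSidedIdeal.mul_mem_right _ _ _ (TwoSidedIdeal.subset_span (by simp))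
    · rw [hv]
      exact TwoSidedIdeal.mul_mem_right _ _ _ (TwoSidedIdeal.subset_span (by simp))
  have hd₂0 : d₂ ≠ 0 := by
    rintro rfl
    have h1 : (1 : R) ∈ (⊥ : TwoSidedIdeal R) := by
      refine TwoSidedIdeal.mem_span_iff.mp h1d₂ ⊥ ?_
      intro z hz
      simp only [Set.mem_singleton_iff] at hz
      subst hz
      show (0 : R) = 0
      rfl
    have : (1 : R) = 0 := h1
    exact one_ne_zero this
  obtain ⟨e, g₁, g₂, α, β, hg₁, hg₂, he⟩ := bez_left' hB γ₂ δ₂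
  have he0 : e ≠ 0 := by
    rintro rfl
    rw [mul_zero] at hg₁ hg₂
    rw [hg₁, hg₂, mul_zero, mul_zero, add_zero] at hd₂
    exact hd₂0 hd₂.symm
  have hunim2 : α * g₁ + β * g₂ = 1 := by
    have t : (α * g₁ + β * g₂) * e = α * γ₂ + β * δ₂ := by rw [hg₁, hg₂]; noncomm_ring
    rw [he] at t
    exact mul_right_cancel₀ he0 (t.trans (one_mul e).symm)
  have h1d₃ : (1 : R) ∈ TwoSidedIdeal.span {(p' * a + q' * b) * g₁ + (p' * c) * g₂} := by
    refine one_mem_span_of _ h1d₂ ?_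
    intro z hz
    simp only [Set.mem_singleton_iff] at hz
    rw [hz]
    have t : d₂ = ((p' * a + q' * b) * g₁ + (p' * c) * g₂) * e := by
      rw [← hd₂, hg₁, hg₂]; noncomm_ring
    rw [t]
    exact TwoSidedIdeal.mul_mem_right _ _ _ (TwoSidedIdeal.subset_span (by simp))
  obtain ⟨P, hPu, hP00, hP01⟩ := complete_row hB hunim
  obtain ⟨Q, hQu, hQ00, hQ10⟩ := complete_col hB hunim2
  refine ⟨P, Q, hPu, hQu, ?_⟩
  have hA : (P * Matrix.of ![![a, c], ![b, 0]] * Q) 0 0 =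
      (p' * a + q' * b) * g₁ + (p' * c) * g₂ := by
    have e1 : (P * Matrix.of ![![a, c], ![b, 0]] * Q) 0 0 =
        (P 0 0 * a + P 0 1 * b) * Q 0 0 + (P 0 0 * c) * Q 1 0 := by
      simp [Matrix.mul_apply, Fin.sum_univ_two]
    rw [e1, hP00, hP01, hQ00, hQ10]
  rw [hA]
  exact h1d₃
end

section
/- Let R be an invariant Bezout domain (every element a satisfies aR = Ra) of simple range 2. Then every 2×2 matrix A = [[a, c],[b, 0]] with c ≠ 0 and RaR + RbR + RcR = R is equivalent to a diagonal matrix diag(1, Δ) for some Δ ∈ R. -/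
/-- An invariant ring: `aR = Ra` (as sets) for every element `a`. -/
def IsInvariantRing (R : Type*) [Ring R] : Prop :=
  ∀ a : R, (Submodule.span Rᵐᵒᵖ {a} : Set R) = (Ideal.span {a} : Set R)

open Matrix

section Helpers

variable {R : Type*} [Ring R]

/-- Move a left multiplier across `x` to the right: `r * x = x * r'`. -/
lemma inv_move_left (hInv : IsInvariantRing R) (x r : R) : ∃ r', r * x = x * r' := by
  have h1 : r * x ∈ (Ideal.span {x} : Set R) :=
    Submodule.mem_span_singleton.mpr ⟨r, rfl⟩
  rw [← hInv] at h1
  obtain ⟨g, hg⟩ := Submodule.mem_span_singleton.mp h1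
  exact ⟨g.unop, by rw [← hg, MulOpposite.smul_eq_mul_unop]⟩

/-- Move a right multiplier across `x` to the left: `x * r = r' * x`. -/
lemma inv_move_right (hInv : IsInvariantRing R) (x r : R) : ∃ r', x * r = r' * x := by
  have h1 : x * r ∈ (Submodule.span Rᵐᵒᵖ {x} : Set R) :=
    Submodule.mem_span_singleton.mpr ⟨MulOpposite.op r, by rw [MulOpposite.smul_eq_mul_unop]; rfl⟩
  rw [hInv] at h1
  obtain ⟨g, hg⟩ := Submodule.mem_span_singleton.mp h1
  exact ⟨g, by rw [← hg]; rfl⟩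

lemma rspan_pair_mem {α β z : R} (h : z ∈ Submodule.span Rᵐᵒᵖ ({α, β} : Set R)) :
    ∃ g h' : R, α * g + β * h' = z := by
  obtain ⟨g, h', hh⟩ := Submodule.mem_span_pair.mp h
  exact ⟨g.unop, h'.unop, by rw [← hh, MulOpposite.smul_eq_mul_unop, MulOpposite.smul_eq_mul_unop]⟩

lemma rspan_singleton_mem {α z : R} (h : z ∈ Submodule.span Rᵐᵒᵖ ({α} : Set R)) :
    ∃ g : R, α * g = z := by
  obtain ⟨g, hg⟩ := Submodule.mem_span_singleton.mp h
  exact ⟨g.unop, by rw [← hg, MulOpposite.smul_eq_mul_unop]⟩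

lemma lspan_pair_mem {α β z : R} (h : z ∈ Ideal.span ({α, β} : Set R)) :
    ∃ g h' : R, g * α + h' * β = z := by
  obtain ⟨g, h', hh⟩ := Submodule.mem_span_pair.mp h
  exact ⟨g, h', by simpa [smul_eq_mul] using hh⟩

lemma lspan_singleton_mem {α z : R} (h : z ∈ Ideal.span ({α} : Set R)) :
    ∃ g : R, g * α = z := by
  obtain ⟨g, hg⟩ := Submodule.mem_span_singleton.mp h
  exact ⟨g, by simpa [smul_eq_mul] using hg⟩

/-- In an invariant ring, membership of `1` in the two-sided span of a pair gives a
right-sided Bezout relation. -/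
lemma pair_of_twosided (hInv : IsInvariantRing R) (x y : R)
    (h : (1 : R) ∈ TwoSidedIdeal.span {x, y}) : ∃ u v : R, x * u + y * v = 1 := by
  classical
  let S : Set R := {z | ∃ u v : R, x * u + y * v = z}
  have hz : (0 : R) ∈ S := ⟨0, 0, by simp⟩
  have hadd : ∀ {w z : R}, w ∈ S → z ∈ S → w + z ∈ S := by
    rintro w z ⟨u1, v1, h1⟩ ⟨u2, v2, h2⟩
    exact ⟨u1 + u2, v1 + v2, by rw [← h1, ← h2]; noncomm_ring⟩
  have hneg : ∀ {z : R}, z ∈ S → -z ∈ S := by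
    rintro z ⟨u1, v1, h1⟩
    exact ⟨-u1, -v1, by rw [← h1]; noncomm_ring⟩
  have hml : ∀ {r z : R}, z ∈ S → r * z ∈ S := by
    rintro r z ⟨u1, v1, h1⟩
    obtain ⟨u₂, hu₂⟩ := inv_move_left hInv x r
    obtain ⟨v₂, hv₂⟩ := inv_move_left hInv y r
    refine ⟨u₂ * u1, v₂ * v1, ?_⟩
    rw [← h1, mul_add, ← mul_assoc, ← mul_assoc, ← hu₂, ← hv₂, mul_assoc, mul_assoc]
  have hmr : ∀ {z r : R}, z ∈ S → z * r ∈ S := by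
    rintro z r ⟨u1, v1, h1⟩
    exact ⟨u1 * r, v1 * r, by rw [← h1]; noncomm_ring⟩
  let J : TwoSidedIdeal R := TwoSidedIdeal.mk' S hz hadd hneg hml hmr
  have hsub : ({x, y} : Set R) ⊆ (J : Set R) := by
    rintro z (rfl | rfl)
    · exact (TwoSidedIdeal.mem_mk' S hz @hadd @hneg @hml @hmr z).mpr ⟨1, 0, by simp⟩
    · exact (TwoSidedIdeal.mem_mk' S hz @hadd @hneg @hml @hmr z).mpr ⟨0, 1, by simp⟩
  have h1 : (1 : R) ∈ J := TwoSidedIdeal.mem_span_iff.mp h J hsub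
  exact (TwoSidedIdeal.mem_mk' S hz @hadd @hneg @hml @hmr 1).mp h1

lemma fin2_ext {a b c d a' b' c' d' : R} (h1 : a = a') (h2 : b = b') (h3 : c = c')
    (h4 : d = d') : (!![a, b; c, d] : Matrix (Fin 2) (Fin 2) R) = !![a', b'; c', d'] := by
  subst h1 h2 h3 h4; rfl

variable [IsDomain R]

lemma dom_flip {x y : R} (h : x * y = 1) : y * x = 1 := by
  have hx : x ≠ 0 := by rintro rfl; simp at h
  exact mul_left_cancel₀ hx (by rw [← mul_assoc, h, one_mul, mul_one])

/-- Completion of a right-unimodular row of length 2 over an invariant right Bezout domain. -/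
lemma row_complete
    (hB1 : ∀ I : Submodule Rᵐᵒᵖ R, I.FG → ∃ d : R, I = Submodule.span Rᵐᵒᵖ {d})
    (hInv : IsInvariantRing R) {p q s t : R} (h : p * s + q * t = 1) :
    ∃ e f : R, ∃ D : Matrix (Fin 2) (Fin 2) R,
      (!![p, q; e, f]) * D = 1 ∧ D * (!![p, q; e, f]) = 1 := by
  by_cases hp : p = 0
  · subst hp
    have hqt : q * t = 1 := by simpa using h
    have htq : t * q = 1 := dom_flip hqt
    refine ⟨1, 0, !![0, 1; t, 0], ?_, ?_⟩
    · rw [Matrix.mul_fin_two, Matrix.one_fin_two]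
      exact fin2_ext (by rw [← hqt]; noncomm_ring) (by noncomm_ring) (by noncomm_ring)
        (by noncomm_ring)
    · rw [Matrix.mul_fin_two, Matrix.one_fin_two]
      exact fin2_ext (by noncomm_ring) (by noncomm_ring) (by noncomm_ring)
        (by rw [← htq]; noncomm_ring)
  by_cases hq : q = 0
  · subst hq
    have hps : p * s = 1 := by simpa using h
    have hsp : s * p = 1 := dom_flip hps
    refine ⟨0, 1, !![s, 0; 0, 1], ?_, ?_⟩
    · rw [Matrix.mul_fin_two, Matrix.one_fin_two]
      exact fin2_ext (by rw [← hps]; noncomm_ring) (by noncomm_ring) (by noncomm_ring)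
        (by noncomm_ring)
    · rw [Matrix.mul_fin_two, Matrix.one_fin_two]
      exact fin2_ext (by rw [← hsp]; noncomm_ring) (by noncomm_ring) (by noncomm_ring)
        (by noncomm_ring)
  -- general case : p ≠ 0, q ≠ 0
  have hpq0 : p * q ≠ 0 := mul_ne_zero hp hq
  obtain ⟨c₁, hc₁⟩ := inv_move_left hInv p q   -- q * p = p * c₁
  obtain ⟨c₂, hc₂⟩ := inv_move_left hInv q p   -- p * q = q * c₂
  obtain ⟨t₁, ht₁⟩ := inv_move_left hInv p t   -- t * p = p * t₁
  obtain ⟨s₁, hs₁⟩ := inv_move_left hInv q s   -- s * q = q * s₁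
  obtain ⟨m, hm⟩ := hB1 (Submodule.span Rᵐᵒᵖ {p * q, q * p})
    (Submodule.fg_span (Set.toFinite _))
  have hmmem : m ∈ Submodule.span Rᵐᵒᵖ ({p * q, q * p} : Set R) := by
    rw [hm]; exact Submodule.mem_span_singleton_self m
  obtain ⟨g, h', hgh⟩ := rspan_pair_mem hmmem   -- p*q*g + q*p*h' = m
  have hj₀ : p * (q * g + c₁ * h') = m := by
    calc p * (q * g + c₁ * h') = p * q * g + p * c₁ * h' := by noncomm_ring
    _ = p * q * g + q * p * h' := by rw [← hc₁]
    _ = m := hgh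
  have hk₀ : q * (c₂ * g + p * h') = m := by
    calc q * (c₂ * g + p * h') = q * c₂ * g + q * p * h' := by noncomm_ring
    _ = p * q * g + q * p * h' := by rw [← hc₂]
    _ = m := hgh
  set j₀ : R := q * g + c₁ * h' with hj₀def
  set k₀ : R := c₂ * g + p * h' with hk₀def
  have hpqI : p * q ∈ Submodule.span Rᵐᵒᵖ ({p * q, q * p} : Set R) :=
    Submodule.subset_span (by simp)
  rw [hm] at hpqI
  obtain ⟨w, hw⟩ := rspan_singleton_mem hpqI   -- m * w = p * q
  have hqpI : q * p ∈ Submodule.span Rᵐᵒᵖ ({p * q, q * p} : Set R) :=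
    Submodule.subset_span (by simp)
  rw [hm] at hqpI
  obtain ⟨w₂, hw₂⟩ := rspan_singleton_mem hqpI   -- m * w₂ = q * p
  have hm0 : m ≠ 0 := fun h0 => hpq0 (by rw [← hw, h0, zero_mul])
  have hj0 : j₀ ≠ 0 := fun h0 => hm0 (by rw [← hj₀, h0, mul_zero])
  set r₁ : R := w₂ * t₁ with hr₁def
  set r₂ : R := w * s₁ with hr₂def
  have hmr₁ : m * r₁ = q * t * p := by
    calc m * (w₂ * t₁) = q * p * t₁ := by rw [← mul_assoc, hw₂]
    _ = q * (t * p) := by rw [ht₁, mul_assoc]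
    _ = q * t * p := (mul_assoc q t p).symm
  have hmr₂ : m * r₂ = p * s * q := by
    calc m * (w * s₁) = p * q * s₁ := by rw [← mul_assoc, hw]
    _ = p * (s * q) := by rw [hs₁, mul_assoc]
    _ = p * s * q := (mul_assoc p s q).symm
  have key1 : p * (1 - s * p) = m * r₁ := by
    rw [hmr₁]
    calc p * (1 - s * p) = (p * s + q * t) * p - p * s * p := by rw [h]; noncomm_ring
    _ = q * t * p := by noncomm_ring
  have key2 : q * (1 - t * q) = m * r₂ := by
    rw [hmr₂]
    calc q * (1 - t * q) = (p * s + q * t) * q - q * t * q := by rw [h]; noncomm_ring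
    _ = p * s * q := by noncomm_ring
  have hr₁j : j₀ * r₁ = 1 - s * p :=
    mul_left_cancel₀ hp (by rw [← mul_assoc, hj₀, ← key1])
  have hr₁k : k₀ * r₁ = t * p :=
    mul_left_cancel₀ hq (by rw [← mul_assoc, hk₀, hmr₁, mul_assoc])
  have hr₂j : j₀ * r₂ = s * q :=
    mul_left_cancel₀ hp (by rw [← mul_assoc, hj₀, hmr₂, mul_assoc])
  have hr₂k : k₀ * r₂ = 1 - t * q :=
    mul_left_cancel₀ hq (by rw [← mul_assoc, hk₀, ← key2])
  refine ⟨r₁, -r₂, !![s, j₀; t, -k₀], ?_, ?_⟩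
  · -- C * D = 1
    rw [Matrix.mul_fin_two, Matrix.one_fin_two]
    refine fin2_ext h ?_ ?_ ?_
    · rw [mul_neg, hj₀, hk₀]; abel
    · apply mul_left_cancel₀ hj0
      calc j₀ * (r₁ * s + -r₂ * t) = (j₀ * r₁) * s - (j₀ * r₂) * t := by noncomm_ring
      _ = (1 - s * p) * s - (s * q) * t := by rw [hr₁j, hr₂j]
      _ = s - s * (p * s + q * t) := by noncomm_ring
      _ = j₀ * 0 := by rw [h]; noncomm_ring
    · apply mul_left_cancel₀ hj0
      calc j₀ * (r₁ * j₀ + -r₂ * -k₀) = (j₀ * r₁) * j₀ + (j₀ * r₂) * k₀ := by noncomm_ring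
      _ = (1 - s * p) * j₀ + (s * q) * k₀ := by rw [hr₁j, hr₂j]
      _ = j₀ - s * (p * j₀) + s * (q * k₀) := by noncomm_ring
      _ = j₀ * 1 := by rw [hj₀, hk₀]; noncomm_ring
  · -- D * C = 1
    rw [Matrix.mul_fin_two, Matrix.one_fin_two]
    refine fin2_ext ?_ ?_ ?_ ?_
    · rw [hr₁j]; noncomm_ring
    · rw [mul_neg, hr₂j]; abel
    · rw [neg_mul, hr₁k]; abel
    · rw [neg_mul_neg, hr₂k]; noncomm_ring

/-- Completion of a left-unimodular column of length 2 over an invariant left Bezout domain. -/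
lemma col_complete
    (hB2 : ∀ I : Ideal R, I.FG → ∃ d : R, I = Ideal.span {d})
    (hInv : IsInvariantRing R) {x y u v : R} (h : x * u + y * v = 1) :
    ∃ e f : R, ∃ D : Matrix (Fin 2) (Fin 2) R,
      (!![u, e; v, f]) * D = 1 ∧ D * (!![u, e; v, f]) = 1 := by
  by_cases hu : u = 0
  · subst hu
    have hyv : y * v = 1 := by simpa using h
    have hvy : v * y = 1 := dom_flip hyv
    refine ⟨1, 0, !![0, y; 1, 0], ?_, ?_⟩
    · rw [Matrix.mul_fin_two, Matrix.one_fin_two]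
      exact fin2_ext (by noncomm_ring) (by noncomm_ring) (by noncomm_ring)
        (by rw [← hvy]; noncomm_ring)
    · rw [Matrix.mul_fin_two, Matrix.one_fin_two]
      exact fin2_ext (by rw [← hyv]; noncomm_ring) (by noncomm_ring) (by noncomm_ring)
        (by noncomm_ring)
  by_cases hv : v = 0
  · subst hv
    have hxu : x * u = 1 := by simpa using h
    have hux : u * x = 1 := dom_flip hxu
    refine ⟨0, 1, !![x, 0; 0, 1], ?_, ?_⟩
    · rw [Matrix.mul_fin_two, Matrix.one_fin_two]
      exact fin2_ext (by rw [← hux]; noncomm_ring) (by noncomm_ring) (by noncomm_ring)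
        (by noncomm_ring)
    · rw [Matrix.mul_fin_two, Matrix.one_fin_two]
      exact fin2_ext (by rw [← hxu]; noncomm_ring) (by noncomm_ring) (by noncomm_ring)
        (by noncomm_ring)
  -- general case : u ≠ 0, v ≠ 0
  have huv0 : u * v ≠ 0 := mul_ne_zero hu hv
  obtain ⟨v₁, hv₁⟩ := inv_move_right hInv u v   -- u * v = v₁ * u
  obtain ⟨u₁, hu₁⟩ := inv_move_right hInv v u   -- v * u = u₁ * v
  obtain ⟨y₁, hy₁⟩ := inv_move_right hInv u y   -- u * y = y₁ * u
  obtain ⟨x₁, hx₁⟩ := inv_move_right hInv v x   -- v * x = x₁ * v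
  obtain ⟨m, hm⟩ := hB2 (Ideal.span {u * v, v * u})
    (Submodule.fg_span (Set.toFinite _))
  have hmmem : m ∈ Ideal.span ({u * v, v * u} : Set R) := by
    rw [hm]; exact Submodule.mem_span_singleton_self m
  obtain ⟨g, h', hgh⟩ := lspan_pair_mem hmmem   -- g*(u*v) + h'*(v*u) = m
  have hj₀ : (g * v₁ + h' * v) * u = m := by
    calc (g * v₁ + h' * v) * u = g * (v₁ * u) + h' * (v * u) := by noncomm_ring
    _ = g * (u * v) + h' * (v * u) := by rw [← hv₁]
    _ = m := hgh
  have hk₀ : (g * u + h' * u₁) * v = m := by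
    calc (g * u + h' * u₁) * v = g * (u * v) + h' * (u₁ * v) := by noncomm_ring
    _ = g * (u * v) + h' * (v * u) := by rw [← hu₁]
    _ = m := hgh
  set j₀ : R := g * v₁ + h' * v with hj₀def
  set k₀ : R := g * u + h' * u₁ with hk₀def
  have huvI : u * v ∈ Ideal.span ({u * v, v * u} : Set R) :=
    Submodule.subset_span (by simp)
  rw [hm] at huvI
  obtain ⟨w, hw⟩ := lspan_singleton_mem huvI   -- w * m = u * v
  have hvuI : v * u ∈ Ideal.span ({u * v, v * u} : Set R) :=
    Submodule.subset_span (by simp)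
  rw [hm] at hvuI
  obtain ⟨w₂, hw₂⟩ := lspan_singleton_mem hvuI   -- w₂ * m = v * u
  have hm0 : m ≠ 0 := fun h0 => huv0 (by rw [← hw, h0, mul_zero])
  have hj0 : j₀ ≠ 0 := fun h0 => hm0 (by rw [← hj₀, h0, zero_mul])
  set r₁ : R := y₁ * w with hr₁def
  set r₂ : R := x₁ * w₂ with hr₂def
  have hmr₁ : r₁ * m = u * y * v := by
    calc (y₁ * w) * m = y₁ * (u * v) := by rw [mul_assoc, hw]
    _ = (u * y) * v := by rw [hy₁, ← mul_assoc]
  have hmr₂ : r₂ * m = v * x * u := by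
    calc (x₁ * w₂) * m = x₁ * (v * u) := by rw [mul_assoc, hw₂]
    _ = (v * x) * u := by rw [hx₁, ← mul_assoc]
  have key1 : (1 - u * x) * u = r₁ * m := by
    rw [hmr₁]
    calc (1 - u * x) * u = u * (x * u + y * v) - u * x * u := by rw [h]; noncomm_ring
    _ = u * y * v := by noncomm_ring
  have key2 : (1 - v * y) * v = r₂ * m := by
    rw [hmr₂]
    calc (1 - v * y) * v = v * (x * u + y * v) - v * y * v := by rw [h]; noncomm_ring
    _ = v * x * u := by noncomm_ring
  have hr₁j : r₁ * j₀ = 1 - u * x :=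
    mul_right_cancel₀ hu (by rw [mul_assoc, hj₀, ← key1])
  have hr₁k : r₁ * k₀ = u * y :=
    mul_right_cancel₀ hv (by rw [mul_assoc, hk₀, hmr₁, mul_assoc])
  have hr₂j : r₂ * j₀ = v * x :=
    mul_right_cancel₀ hu (by rw [mul_assoc, hj₀, hmr₂, mul_assoc])
  have hr₂k : r₂ * k₀ = 1 - v * y :=
    mul_right_cancel₀ hv (by rw [mul_assoc, hk₀, ← key2])
  refine ⟨r₁, -r₂, !![x, y; j₀, -k₀], ?_, ?_⟩
  · -- C * D = 1
    rw [Matrix.mul_fin_two, Matrix.one_fin_two]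
    refine fin2_ext ?_ ?_ ?_ ?_
    · rw [hr₁j]; noncomm_ring
    · rw [mul_neg, hr₁k]; abel
    · rw [neg_mul, hr₂j]; abel
    · rw [neg_mul_neg, hr₂k]; noncomm_ring
  · -- D * C = 1
    rw [Matrix.mul_fin_two, Matrix.one_fin_two]
    refine fin2_ext h ?_ ?_ ?_
    · apply mul_right_cancel₀ hj0
      calc (x * r₁ + y * -r₂) * j₀ = x * (r₁ * j₀) - y * (r₂ * j₀) := by noncomm_ring
      _ = x * (1 - u * x) - y * (v * x) := by rw [hr₁j, hr₂j]
      _ = x - (x * u + y * v) * x := by noncomm_ring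
      _ = 0 * j₀ := by rw [h]; noncomm_ring
    · rw [neg_mul, hj₀, hk₀]; abel
    · apply mul_right_cancel₀ hj0
      calc (j₀ * r₁ + -k₀ * -r₂) * j₀ = j₀ * (r₁ * j₀) + k₀ * (r₂ * j₀) := by noncomm_ring
      _ = j₀ * (1 - u * x) + k₀ * (v * x) := by rw [hr₁j, hr₂j]
      _ = j₀ - (j₀ * u) * x + (k₀ * v) * x := by noncomm_ring
      _ = 1 * j₀ := by rw [hj₀, hk₀]; noncomm_ring

end Helpers

theorem diag_reduction_of_invariant_simpleRange2 {R : Type*} [Ring R] [IsDomain R]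
    (hB : IsBezout2 R) (hInv : IsInvariantRing R) (hS : SimpleRange2 R)
    (a b c : R) (hc : c ≠ 0)
    (habc : (1 : R) ∈ TwoSidedIdeal.span {a, b, c}) :
    ∃ P Q : Matrix (Fin 2) (Fin 2) R, IsUnit P ∧ IsUnit Q ∧
      ∃ Δ : R, P * Matrix.of ![![a, c], ![b, 0]] * Q = Matrix.of ![![1, 0], ![0, Δ]] := by
  obtain ⟨p, q, hpq⟩ := hS a b c hc habc
  obtain ⟨u, v, huv⟩ := pair_of_twosided hInv _ _ hpq
  -- huv : (p*a + q*b) * u + (p*c) * v = 1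
  have hst : p * (a * u + c * v) + q * (b * u) = 1 := by
    rw [← huv]; noncomm_ring
  obtain ⟨e, f, D₁, hCD₁, hDC₁⟩ := row_complete hB.1 hInv hst
  obtain ⟨e', f', D₂, hCD₂, hDC₂⟩ := col_complete hB.2 hInv huv
  set C₁ : Matrix (Fin 2) (Fin 2) R := !![p, q; e, f] with hC₁def
  set C₂ : Matrix (Fin 2) (Fin 2) R := !![u, e'; v, f'] with hC₂def
  set β : R := (p * a + q * b) * e' + p * c * f' with hβdef
  set γ : R := (e * a + f * b) * u + e * c * v with hγdef
  set δ : R := (e * a + f * b) * e' + e * c * f' with hδdef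
  have hA : Matrix.of ![![a, c], ![b, 0]] = (!![a, c; b, 0] : Matrix (Fin 2) (Fin 2) R) := rfl
  have h1 : C₁ * !![a, c; b, 0] = !![p * a + q * b, p * c; e * a + f * b, e * c] := by
    rw [hC₁def, Matrix.mul_fin_two]
    exact fin2_ext rfl (by noncomm_ring) rfl (by noncomm_ring)
  have hM : C₁ * !![a, c; b, 0] * C₂ = !![1, β; γ, δ] := by
    rw [h1, hC₂def, Matrix.mul_fin_two]
    exact fin2_ext huv rfl rfl rfl
  refine ⟨!![1, 0; -γ, 1] * C₁, C₂ * !![1, -β; 0, 1], ?_, ?_, δ - γ * β, ?_⟩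
  · refine IsUnit.mul ?_ (isUnit_iff_exists.mpr ⟨D₁, hCD₁, hDC₁⟩)
    refine isUnit_iff_exists.mpr ⟨!![1, 0; γ, 1], ?_, ?_⟩
    · rw [Matrix.mul_fin_two, Matrix.one_fin_two]
      exact fin2_ext (by noncomm_ring) (by noncomm_ring) (by noncomm_ring) (by noncomm_ring)
    · rw [Matrix.mul_fin_two, Matrix.one_fin_two]
      exact fin2_ext (by noncomm_ring) (by noncomm_ring) (by noncomm_ring) (by noncomm_ring)
  · refine IsUnit.mul (isUnit_iff_exists.mpr ⟨D₂, hCD₂, hDC₂⟩) ?_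
    refine isUnit_iff_exists.mpr ⟨!![1, β; 0, 1], ?_, ?_⟩
    · rw [Matrix.mul_fin_two, Matrix.one_fin_two]
      exact fin2_ext (by noncomm_ring) (by noncomm_ring) (by noncomm_ring) (by noncomm_ring)
    · rw [Matrix.mul_fin_two, Matrix.one_fin_two]
      exact fin2_ext (by noncomm_ring) (by noncomm_ring) (by noncomm_ring) (by noncomm_ring)
  · rw [hA]
    have hassoc : !![1, 0; -γ, 1] * C₁ * !![a, c; b, 0] * (C₂ * !![1, -β; 0, 1]) =
        !![1, 0; -γ, 1] * (C₁ * !![a, c; b, 0] * C₂) * !![1, -β; 0, 1] := by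
      noncomm_ring
    rw [hassoc, hM]
    have h2 : (!![1, 0; -γ, 1] : Matrix (Fin 2) (Fin 2) R) * !![1, β; γ, δ] =
        !![1, β; 0, δ - γ * β] := by
      rw [Matrix.mul_fin_two]
      exact fin2_ext (by noncomm_ring) (by noncomm_ring) (by noncomm_ring) (by noncomm_ring)
    rw [h2, Matrix.mul_fin_two]
    show (!![_, _; _, _] : Matrix (Fin 2) (Fin 2) R) = !![1, 0; 0, δ - γ * β]
    exact fin2_ext (by noncomm_ring) (by noncomm_ring) (by noncomm_ring) (by noncomm_ring)
end

section
/- Let R be a Bezout domain of simple range 2, and suppose RaR + RbR + RcR = R with c ≠ 0 and R(pa+qb)R + R(pc)R = R. Then p and q in this equality may be chosen such that pR + qR = R; more precisely, if pR + qR = tR with p = tp₀, q = tq₀ and p₀R + q₀R = R, then RtR = R and R(p₀a + q₀b)R + R(p₀c)R = R. -/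
theorem remark_reduction {R : Type*} [Ring R] [IsDomain R]
    (hB : IsBezout2 R) (hS : SimpleRange2 R)
    (hmul : ∀ x y : R, (1 : R) ∈ TwoSidedIdeal.span {x} →
      (1 : R) ∈ TwoSidedIdeal.span {y} → (1 : R) ∈ TwoSidedIdeal.span {x * y})
    (a b c p q t p₀ q₀ : R) (hc : c ≠ 0)
    (habc : (1 : R) ∈ TwoSidedIdeal.span {a, b, c})
    (hpq : (1 : R) ∈ TwoSidedIdeal.span {p * a + q * b, p * c})
    (ht : Submodule.span Rᵐᵒᵖ {p, q} = Submodule.span Rᵐᵒᵖ ({t} : Set R))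
    (hp : p = t * p₀) (hq : q = t * q₀)
    (hp₀q₀ : ∃ x y : R, p₀ * x + q₀ * y = 1) :
    (1 : R) ∈ TwoSidedIdeal.span {t} ∧
    (1 : R) ∈ TwoSidedIdeal.span {p₀ * a + q₀ * b, p₀ * c} := by
  rw [TwoSidedIdeal.mem_span_iff] at hpq
  have h1 : p * a + q * b = t * (p₀ * a + q₀ * b) := by
    rw [hp, hq, mul_add, mul_assoc, mul_assoc]
  have h2 : p * c = t * (p₀ * c) := by rw [hp, mul_assoc]
  constructor
  · refine hpq _ ?_
    rintro x (rfl | rfl)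
    · rw [h1]
      exact TwoSidedIdeal.mul_mem_right _ _ _ (TwoSidedIdeal.subset_span rfl)
    · rw [h2]
      exact TwoSidedIdeal.mul_mem_right _ _ _ (TwoSidedIdeal.subset_span rfl)
  · refine hpq _ ?_
    rintro x (rfl | rfl)
    · rw [h1]
      exact TwoSidedIdeal.mul_mem_left _ _ _
        (TwoSidedIdeal.subset_span (Set.mem_insert _ _))
    · rw [h2]
      exact TwoSidedIdeal.mul_mem_left _ _ _
        (TwoSidedIdeal.subset_span (by simp))
end

section
/- Let R be a D-K elementary divisor domain (every matrix is equivalent to diag(ε₁,…,ε_r,0,…,0) with Rε_{i+1}R ⊆ ε_iR ∩ Rε_i and ε₁,…,ε_{r−1} invariant). Then R is a ring of simple range 2. -/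
/-- A D-K elementary divisor ring: every matrix is equivalent to a diagonal matrix
`diag(ε₁, …, ε_r, 0, …, 0)` with `Rε_{i+1}R ⊆ ε_iR ∩ Rε_i` and `ε₁, …, ε_{r-1}` invariant. -/
def DKElementaryDivisorRing (R : Type*) [Ring R] : Prop :=
  ∀ (n m : ℕ) (A : Matrix (Fin n) (Fin m) R),
    ∃ (P : Matrix (Fin n) (Fin n) R) (Q : Matrix (Fin m) (Fin m) R) (r : ℕ),
      IsUnit P ∧ IsUnit Q ∧
      -- off-diagonal entries vanish
      (∀ (i : Fin n) (j : Fin m), (i : ℕ) ≠ (j : ℕ) → (P * A * Q) i j = 0) ∧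
      -- diagonal entries beyond position `r` vanish
      (∀ (i : Fin n) (j : Fin m), (i : ℕ) = (j : ℕ) → r ≤ (i : ℕ) → (P * A * Q) i j = 0) ∧
      -- the first `r` diagonal entries are nonzero
      (∀ (i : Fin n) (j : Fin m), (i : ℕ) = (j : ℕ) → (i : ℕ) < r → (P * A * Q) i j ≠ 0) ∧
      -- `R ε_{i+1} R ⊆ ε_i R ∩ R ε_i`
      (∀ (i : Fin n) (j : Fin m) (i' : Fin n) (j' : Fin m), (i : ℕ) = (j : ℕ) → (i' : ℕ) = (j' : ℕ) →
        (i' : ℕ) = (i : ℕ) + 1 → (i' : ℕ) < r →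
        (TwoSidedIdeal.span {(P * A * Q) i' j'} : Set R) ⊆
          (Submodule.span Rᵐᵒᵖ {(P * A * Q) i j} : Set R) ∩
          (Ideal.span {(P * A * Q) i j} : Set R)) ∧
      -- `ε₁, …, ε_{r-1}` are invariant
      (∀ (i : Fin n) (j : Fin m), (i : ℕ) = (j : ℕ) → (i : ℕ) + 1 < r → InvariantElem ((P * A * Q) i j))

/-!
Reduce `A = !![a, c; b, 0]` to `P * A * Q = diag(ε₁, ε₂)`. Since `ε₂ ∈ Rε₁R`, every entry of
`A = P⁻¹ * diag(ε₁, ε₂) * Q⁻¹` lies in `Rε₁R`, so `Rε₁R = R` because `RaR + RbR + RcR = R`.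
On the other hand, with `(p, q)` the first row of `P`, the first row of `P * A` is
`(pa + qb, pc)`, so `ε₁ = (P * A * Q) 0 0` lies in `R(pa + qb)R + R(pc)R`.
-/

section

variable {R : Type*} [Ring R]

lemma TwoSidedIdeal.mem_span_singleton_of_mem_ideal_span {x y : R}
    (h : x ∈ Ideal.span {y}) : x ∈ TwoSidedIdeal.span {y} := by
  obtain ⟨z, rfl⟩ := Ideal.mem_span_singleton'.1 h
  exact mul_mem_left _ z y (subset_span rfl)

lemma DKElementaryDivisorRing.exists_units_mul_mul_eq_diag_two
    (hDK : DKElementaryDivisorRing R) (A : Matrix (Fin 2) (Fin 2) R) :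
    ∃ (P Q : (Matrix (Fin 2) (Fin 2) R)ˣ) (ε₁ ε₂ : R),
      (P : Matrix _ _ R) * A * (Q : Matrix _ _ R) = !![ε₁, 0; 0, ε₂] ∧
        ε₂ ∈ TwoSidedIdeal.span {ε₁} := by
  obtain ⟨_, _, r, ⟨P, rfl⟩, ⟨Q, rfl⟩, hoff, hbeyond, -, hchain, -⟩ := hDK 2 2 A
  set D := (P : Matrix _ _ R) * A * (Q : Matrix _ _ R)
  refine ⟨P, Q, D 0 0, D 1 1, ?_, ?_⟩
  · ext i j
    fin_cases i <;> fin_cases j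
    exacts [rfl, hoff 0 1 (by simp), hoff 1 0 (by simp), rfl]
  · by_cases hr : 1 < r
    · exact TwoSidedIdeal.mem_span_singleton_of_mem_ideal_span
        (hchain 0 0 1 1 rfl rfl rfl hr (TwoSidedIdeal.subset_span rfl)).2
    · rw [hbeyond 1 1 rfl (by simpa using hr)]
      exact zero_mem _

lemma TwoSidedIdeal.mem_matrix_of_units_mul_mul_mem {n : Type*} [Fintype n] [DecidableEq n]
    {I : TwoSidedIdeal R} (P Q : (Matrix n n R)ˣ) {A : Matrix n n R}
    (h : (P : Matrix n n R) * A * (Q : Matrix n n R) ∈ I.matrix n) : A ∈ I.matrix n := by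
  have := (I.matrix n).mul_mem_right _ (↑Q⁻¹) ((I.matrix n).mul_mem_left (↑P⁻¹) _ h)
  simpa [← Matrix.mul_assoc] using this

end

theorem simpleRange2_of_DK_elementary_divisor_general {R : Type*} [Ring R]
    (hDK : DKElementaryDivisorRing R) : SimpleRange2 R := by
  intro a b c _ h1
  obtain ⟨P, Q, ε₁, ε₂, hPAQ, hε₂⟩ := hDK.exists_units_mul_mul_eq_diag_two !![a, c; b, 0]
  set J := TwoSidedIdeal.span {ε₁}
  have hA : !![a, c; b, 0] ∈ J.matrix (Fin 2) := by
    refine J.mem_matrix_of_units_mul_mul_mem P Q (hPAQ ▸ ?_)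
    intro i j
    fin_cases i <;> fin_cases j
    exacts [TwoSidedIdeal.subset_span rfl, J.zero_mem, J.zero_mem, hε₂]
  have hJ : (1 : R) ∈ J := by
    refine TwoSidedIdeal.span_le.2 ?_ h1
    rintro x (rfl | rfl | rfl)
    exacts [hA 0 0, hA 1 0, hA 0 1]
  refine ⟨P 0 0, P 0 1, TwoSidedIdeal.span_le.2 (Set.singleton_subset_iff.2 ?_) hJ⟩
  have hε₁ : ε₁ = (P 0 0 * a + P 0 1 * b) * Q 0 0 + (P 0 0 * c) * Q 1 0 := by
    simpa [Matrix.mul_apply, Fin.sum_univ_two] using (congrFun (congrFun hPAQ 0) 0).symm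
  rw [SetLike.mem_coe, hε₁]
  exact add_mem (TwoSidedIdeal.mul_mem_right _ _ _ (TwoSidedIdeal.subset_span (by simp)))
    (TwoSidedIdeal.mul_mem_right _ _ _ (TwoSidedIdeal.subset_span (by simp)))

theorem simpleRange2_of_DK_elementary_divisor {R : Type*} [Ring R] [IsDomain R]
    (hDK : DKElementaryDivisorRing R) : SimpleRange2 R :=
  simpleRange2_of_DK_elementary_divisor_general hDK
end

section
/- A commutative Bezout ring is a Hermite ring if and only if it has stable range 2. -/
/-- A commutative Hermite ring: every `1 × 2` matrix admits diagonal reduction. -/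
def IsHermiteRing (R : Type*) [CommRing R] : Prop :=
  ∀ a b : R, ∃ Q : Matrix (Fin 2) (Fin 2) R, IsUnit Q ∧
    ∃ d : R, Matrix.of ![![a, b]] * Q = Matrix.of ![![d, 0]]

/-- Stable range 2: `aR + bR + cR = R` implies `(a+cx)R + (b+cy)R = R` for some `x, y`. -/
def StableRange2 (R : Type*) [CommRing R] : Prop :=
  ∀ a b c : R, Ideal.span {a, b, c} = ⊤ →
    ∃ x y : R, Ideal.span {a + c * x, b + c * y} = ⊤

lemma span_pair_top_iff {R : Type*} [CommRing R] {a b : R} :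
    Ideal.span {a, b} = ⊤ ↔ ∃ p q : R, p * a + q * b = 1 := by
  rw [Ideal.eq_top_iff_one, Ideal.mem_span_pair]

lemma span_triple_top_iff {R : Type*} [CommRing R] {a b c : R} :
    Ideal.span {a, b, c} = ⊤ ↔ ∃ p q r : R, p * a + q * b + r * c = 1 := by
  rw [Ideal.eq_top_iff_one, Ideal.mem_span_insert]
  constructor
  · rintro ⟨p, z, hz, h⟩
    rw [Ideal.mem_span_pair] at hz
    obtain ⟨q, r, hz⟩ := hz
    exact ⟨p, q, r, by linear_combination -h + hz⟩
  · rintro ⟨p, q, r, h⟩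
    exact ⟨p, q * b + r * c, Ideal.mem_span_pair.mpr ⟨q, r, rfl⟩, by linear_combination -h⟩

theorem hermite_iff_stableRange2 (R : Type*) [CommRing R] [IsBezout R] :
    IsHermiteRing R ↔ StableRange2 R := by
  constructor
  · -- Hermite → SR2
    intro H a b c habc
    obtain ⟨Q, hQ, d, hd⟩ := H a b
    obtain ⟨Qi, hQi⟩ := hQ.exists_right_inv
    -- (a, b) = (d, 0) * Qi
    have hab : Matrix.of ![![a, b]] = Matrix.of ![![d, 0]] * Qi := by
      rw [← hd, Matrix.mul_assoc, hQi, Matrix.mul_one]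
    have ha : a = d * Qi 0 0 := by
      have := congrFun (congrFun hab 0) 0
      simpa [Matrix.mul_apply, Fin.sum_univ_two] using this
    have hb : b = d * Qi 0 1 := by
      have := congrFun (congrFun hab 0) 1
      simpa [Matrix.mul_apply, Fin.sum_univ_two] using this
    obtain ⟨u, hu⟩ : ∃ u, u = Qi 0 0 := ⟨_, rfl⟩
    obtain ⟨v, hv⟩ : ∃ v, v = Qi 0 1 := ⟨_, rfl⟩
    rw [← hu] at ha
    rw [← hv] at hb
    -- u, v unimodular via det of Qi
    have hdetQi : Q.det * Qi.det = 1 := by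
      rw [← Matrix.det_mul, hQi, Matrix.det_one]
    have hdet2 : Qi.det = u * Qi 1 1 - v * Qi 1 0 := by
      rw [Matrix.det_fin_two, hu, hv]
    obtain ⟨s, t, hust⟩ : ∃ s t, u * s + v * t = 1 :=
      ⟨Qi 1 1 * Q.det, -(Qi 1 0 * Q.det), by
        have : Qi.det * Q.det = 1 := by linear_combination hdetQi
        rw [hdet2] at this
        linear_combination this⟩
    -- d p + c q = 1
    obtain ⟨α, β, q, h1⟩ := span_triple_top_iff.mp habc
    obtain ⟨p, hp⟩ : ∃ p, p = α * u + β * v := ⟨_, rfl⟩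
    have hdp : p * d + q * c = 1 := by
      rw [hp]; rw [ha, hb] at h1; linear_combination h1
    refine ⟨u * q + t, v * q - s, span_pair_top_iff.mpr ?_⟩
    have h2 : s * (a + c * (u * q + t)) + t * (b + c * (v * q - s)) = d + c * q := by
      rw [ha, hb]; linear_combination (d + c * q) * hust
    have h3 : v * (a + c * (u * q + t)) - u * (b + c * (v * q - s)) = c := by
      rw [ha, hb]; linear_combination c * hust
    exact ⟨p * s + (q - p * q) * v, p * t - (q - p * q) * u, by
      linear_combination p * h2 + (q - p * q) * h3 + hdp⟩
  · -- SR2 → Hermite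
    intro H a b
    obtain ⟨u, ha⟩ : IsBezout.gcd a b ∣ a := IsBezout.gcd_dvd_left a b
    obtain ⟨v, hb⟩ : IsBezout.gcd a b ∣ b := IsBezout.gcd_dvd_right a b
    obtain ⟨d, hdd⟩ : ∃ d, d = IsBezout.gcd a b := ⟨_, rfl⟩
    rw [← hdd] at ha hb
    have hdmem : d ∈ Ideal.span ({a, b} : Set R) := by
      rw [hdd, ← IsBezout.span_gcd]
      exact Ideal.subset_span (Set.mem_singleton _)
    obtain ⟨r, s, hrs⟩ := Ideal.mem_span_pair.mp hdmem
    have hdc : d * (1 - u * r - v * s) = 0 := by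
      rw [ha, hb] at hrs
      linear_combination -hrs
    have huvc : Ideal.span ({u, v, 1 - u * r - v * s} : Set R) = ⊤ :=
      span_triple_top_iff.mpr ⟨r, s, 1, by ring⟩
    obtain ⟨x, y, hxy⟩ := H u v _ huvc
    obtain ⟨α, β, hαβ⟩ := span_pair_top_iff.mp hxy
    have hau : a = d * (u + (1 - u * r - v * s) * x) := by
      rw [ha]; linear_combination -x * hdc
    have hbv : b = d * (v + (1 - u * r - v * s) * y) := by
      rw [hb]; linear_combination -y * hdc
    obtain ⟨u', hu'⟩ : ∃ u', u' = u + (1 - u * r - v * s) * x := ⟨_, rfl⟩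
    obtain ⟨v', hv'⟩ : ∃ v', v' = v + (1 - u * r - v * s) * y := ⟨_, rfl⟩
    rw [← hu'] at hau hαβ
    rw [← hv'] at hbv hαβ
    refine ⟨Matrix.of ![![α, -v'], ![β, u']], ?_, d, ?_⟩
    · rw [Matrix.isUnit_iff_isUnit_det]
      have hdet : (Matrix.of ![![α, -v'], ![β, u']]).det = 1 := by
        rw [Matrix.det_fin_two]
        simp only [Matrix.of_apply, Matrix.cons_val', Matrix.cons_val_zero, Matrix.cons_val_one,
          Matrix.head_cons, Matrix.empty_val', Matrix.cons_val_fin_one, Matrix.head_fin_const]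
        linear_combination hαβ
      rw [hdet]; exact isUnit_one
    · ext i j
      fin_cases i
      fin_cases j
      · have : a * α + b * β = d := by
          rw [hau, hbv]; linear_combination d * hαβ
        simpa [Matrix.mul_apply, Fin.sum_univ_two] using this
      · have : a * (-v') + b * u' = 0 := by
          rw [hau, hbv]; ring
        simpa [Matrix.mul_apply, Fin.sum_univ_two] using this
end

section
/- Every commutative Bezout ring of stable range 1 is an elementary divisor ring. -/
/-!
The matrix is reduced to `diag(d, D)` with `d` dividing every entry of `D`, and one inducts.
The scalar heart is that for all `a b c` some `x` satisfies `(a + x b, x c) = (a, b, c)`: divide the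
triple by a generator of the ideal it spans and apply stable range 1 twice. By induction, its case
`c = 0` gives `t` with `b₀ + t · (b₁, …, bₙ)` generating the ideal of the entries of `b`, hence a
row reduction of `b` to `(β, 0, …, 0)`. After such a reduction of `u`, the general case makes
`u + x v` generate the same ideal as `u` and `v` together. Column operations therefore gather the
ideal of all entries into the first column, a row reduction of that column puts a generator of it
in the corner, and the rest of the first row and column is then cleared.
-/

/-- Stable range 1: `aR + bR = R` implies `(a + bt)R = R` for some `t`. -/
def StableRange1 (R : Type*) [CommRing R] : Prop :=
  ∀ a b : R, Ideal.span {a, b} = ⊤ → ∃ t : R, Ideal.span {a + b * t} = ⊤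

/-- An elementary divisor ring: every matrix is equivalent to a diagonal matrix
with each diagonal entry dividing the next. -/
def ElementaryDivisorRing (R : Type*) [CommRing R] : Prop :=
  ∀ (n m : ℕ) (A : Matrix (Fin n) (Fin m) R),
    ∃ (P : Matrix (Fin n) (Fin n) R) (Q : Matrix (Fin m) (Fin m) R),
      IsUnit P ∧ IsUnit Q ∧
      (∀ (i : Fin n) (j : Fin m), (i : ℕ) ≠ (j : ℕ) → (P * A * Q) i j = 0) ∧
      (∀ (i : Fin n) (j : Fin m) (i' : Fin n) (j' : Fin m), (i : ℕ) = (j : ℕ) → (i' : ℕ) = (j' : ℕ) →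
        (i' : ℕ) = (i : ℕ) + 1 → (P * A * Q) i j ∣ (P * A * Q) i' j')

open Matrix

section

variable {R : Type*} [CommRing R]

theorem IsBezout.exists_span_eq_span_singleton [IsBezout R] {s : Set R} (hs : s.Finite) :
    ∃ d : R, Ideal.span s = Ideal.span {d} :=
  (IsBezout.isPrincipal_of_FG _ (Submodule.fg_span hs)).principal

theorem Ideal.span_range_fin_succ {n : ℕ} (b : Fin (n + 1) → R) :
    Ideal.span (Set.range b) = Ideal.span {b 0} ⊔ Ideal.span (Set.range (Fin.tail b)) := by
  rw [← Ideal.span_insert, ← Fin.range_cons, Fin.cons_self_tail]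

theorem Ideal.span_range_smul_of_eq {ι : Type*} (x : R) {f : ι → R} {γ : R}
    (hf : Ideal.span (Set.range f) = Ideal.span {γ}) :
    Ideal.span (Set.range (x • f)) = Ideal.span {x * γ} := by
  rw [Pi.smul_def, Set.range_smul, Ideal.span, Submodule.span_smul, ← Ideal.span, hf, Ideal.span,
    Submodule.smul_span, Set.smul_set_singleton, smul_eq_mul]

namespace StableRange1

theorem exists_isUnit_add_mul (h : StableRange1 R) {a b p q : R} (hab : p * a + q * b = 1) :
    ∃ t, IsUnit (a + t * b) := by
  obtain ⟨t, ht⟩ := h a b (Ideal.eq_top_iff_one _ |>.2 (Ideal.mem_span_pair.2 ⟨p, q, hab⟩))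
  exact ⟨t, by rw [mul_comm]; exact Ideal.span_singleton_eq_top.1 ht⟩

theorem exists_isUnit_add_mul_add_mul (h : StableRange1 R) {a b c p q r : R}
    (habc : p * a + q * b + r * c = 1) : ∃ x y, IsUnit (a + x * (b + y * c)) := by
  obtain ⟨t, ht⟩ := h.exists_isUnit_add_mul (a := b) (b := p * a + r * c) (p := q) (q := 1)
    (by linear_combination habc)
  obtain ⟨v, hv⟩ := ht.exists_left_inv
  obtain ⟨x, hx⟩ := h.exists_isUnit_add_mul (a := a) (b := b + t * r * c) (p := v * t * p)
    (q := v) (by linear_combination hv)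
  exact ⟨x, t * r, hx⟩

theorem exists_span_add_mul_eq [IsBezout R] (h : StableRange1 R) (a b c : R) :
    ∃ x, Ideal.span {a + x * b, x * c} = Ideal.span {a, b, c} := by
  obtain ⟨d, hd⟩ := IsBezout.exists_span_eq_span_singleton (s := {a, b, c}) (Set.toFinite _)
  have hdvd : ∀ y ∈ ({a, b, c} : Set R), d ∣ y := fun y hy =>
    Ideal.mem_span_singleton.1 (hd ▸ Ideal.subset_span hy)
  obtain ⟨a', rfl⟩ := hdvd a (by simp)
  obtain ⟨b', rfl⟩ := hdvd b (by simp)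
  obtain ⟨c', rfl⟩ := hdvd c (by simp)
  obtain ⟨p, q, r, hpqr⟩ : ∃ p q r, p * (d * a') + q * (d * b') + r * (d * c') = d := by
    have : d ∈ Ideal.span {d * a', d * b', d * c'} := hd ▸ Ideal.mem_span_singleton_self d
    obtain ⟨p, y, hy, hdy⟩ := Ideal.mem_span_insert.1 this
    obtain ⟨q, r, rfl⟩ := Ideal.mem_span_pair.1 hy
    exact ⟨p, q, r, by linear_combination -hdy⟩
  -- `(a', b', c')` need not be unimodular: it is so only up to `1 - p a' - q b' - r c'`, which
  -- `d` kills, so that term disappears again after multiplying by `d`.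
  obtain ⟨x, y, w, hw⟩ := h.exists_isUnit_add_mul_add_mul (a := a') (b := b')
    (c := r * c' + (1 - p * a' - q * b' - r * c')) (p := p) (q := q) (r := 1) (by ring)
  refine ⟨x, le_antisymm ?_ ?_⟩
  · rw [Ideal.span_le, Set.insert_subset_iff, Set.singleton_subset_iff]
    have mem {z} (hz : z ∈ ({d * a', d * b', d * c'} : Set R)) :
        z ∈ Ideal.span {d * a', d * b', d * c'} :=
      Ideal.subset_span hz
    exact ⟨Ideal.add_mem _ (mem (by simp)) (Ideal.mul_mem_left _ _ (mem (by simp))),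
      Ideal.mul_mem_left _ _ (mem (by simp))⟩
  · rw [hd, Ideal.span_singleton_le_iff_mem, Ideal.mem_span_pair]
    refine ⟨↑w⁻¹, ↑w⁻¹ * y * r, ?_⟩
    linear_combination d * w.inv_mul - d * ↑w⁻¹ * hw + ↑w⁻¹ * x * y * hpqr

theorem exists_span_singleton_add_mul_eq [IsBezout R] (h : StableRange1 R) (a b : R) :
    ∃ x, Ideal.span {a + x * b} = Ideal.span {a, b} := by
  simpa [Ideal.span_insert] using h.exists_span_add_mul_eq a b 0

theorem exists_span_range_eq_span_add_dotProduct [IsBezout R] (h : StableRange1 R) {n : ℕ}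
    (b : Fin (n + 1) → R) :
    ∃ t : Fin n → R, Ideal.span (Set.range b) = Ideal.span {b 0 + t ⬝ᵥ Fin.tail b} := by
  induction n with
  | zero => exact ⟨0, by simp [Set.range_unique]⟩
  | succ n ih =>
    obtain ⟨s, hs⟩ := ih (Fin.tail b)
    obtain ⟨τ, hτ⟩ :=
      h.exists_span_singleton_add_mul_eq (b 0) (Fin.tail b 0 + s ⬝ᵥ Fin.tail (Fin.tail b))
    refine ⟨vecCons τ (τ • s), ?_⟩
    rw [Ideal.span_range_fin_succ, hs, ← Ideal.span_insert, ← hτ, cons_dotProduct,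
      smul_dotProduct, smul_eq_mul, mul_add]
    rfl

end StableRange1

namespace Matrix

theorem isUnit_one_add_vecMulVec {n : Type*} [Fintype n] [DecidableEq n] {u v : n → R}
    (h : IsUnit (1 + v ⬝ᵥ u)) : IsUnit (1 + vecMulVec u v) := by
  rwa [isUnit_iff_isUnit_det, vecMulVec_eq Unit, det_one_add_replicateCol_mul_replicateRow]

theorem span_range_mulVec_le {m n : Type*} [Fintype n] (M : Matrix m n R) (v : n → R) :
    Ideal.span (Set.range (M *ᵥ v)) ≤ Ideal.span (Set.range v) :=
  Ideal.span_le.2 <| Set.range_subset_iff.2 fun _ =>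
    Ideal.sum_mem _ fun k _ => Ideal.mul_mem_left _ _ (Ideal.subset_span ⟨k, rfl⟩)

theorem span_range_mulVec_of_isUnit {n : Type*} [Fintype n] [DecidableEq n]
    {M : Matrix n n R} (hM : IsUnit M) (v : n → R) :
    Ideal.span (Set.range (M *ᵥ v)) = Ideal.span (Set.range v) := by
  obtain ⟨U, rfl⟩ := hM
  refine le_antisymm (span_range_mulVec_le _ v) ?_
  simpa [mulVec_mulVec] using span_range_mulVec_le (↑U⁻¹ : Matrix n n R) (↑U *ᵥ v)

theorem dvd_mul_mul_apply {l m n o : Type*} [Fintype m] [Fintype n] {d : R}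
    {A : Matrix m n R} (hA : ∀ i j, d ∣ A i j) (P : Matrix l m R) (Q : Matrix n o R) (i : l)
    (j : o) : d ∣ (P * A * Q) i j := by
  simp only [mul_apply, Finset.sum_mul]
  exact Finset.dvd_sum fun l _ => Finset.dvd_sum fun k _ => ((hA k l).mul_left _).mul_right _

/-- The block matrix `[[a, 0], [0, A]]`. -/
def diagCons {n m : ℕ} (a : R) (A : Matrix (Fin n) (Fin m) R) :
    Matrix (Fin (n + 1)) (Fin (m + 1)) R :=
  of (Fin.cons (Fin.cons a 0) fun i => Fin.cons 0 (A i))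

variable {n m k : ℕ}

@[simp] theorem diagCons_zero_zero (a : R) (A : Matrix (Fin n) (Fin m) R) :
    diagCons a A 0 0 = a := rfl

@[simp] theorem diagCons_zero_succ (a : R) (A : Matrix (Fin n) (Fin m) R) (j : Fin m) :
    diagCons a A 0 j.succ = 0 := rfl

@[simp] theorem diagCons_succ_zero (a : R) (A : Matrix (Fin n) (Fin m) R) (i : Fin n) :
    diagCons a A i.succ 0 = 0 := rfl

@[simp] theorem diagCons_succ_succ (a : R) (A : Matrix (Fin n) (Fin m) R) (i : Fin n)
    (j : Fin m) : diagCons a A i.succ j.succ = A i j := rfl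

theorem mul_diagCons_apply_zero {l : Type*} (M : Matrix l (Fin (n + 1)) R) (a : R)
    (A : Matrix (Fin n) (Fin m) R) (i : l) : (M * diagCons a A) i 0 = M i 0 * a := by
  simp [mul_apply, Fin.sum_univ_succ]

theorem mul_diagCons_apply_succ {l : Type*} (M : Matrix l (Fin (n + 1)) R) (a : R)
    (A : Matrix (Fin n) (Fin m) R) (i : l) (j : Fin m) :
    (M * diagCons a A) i j.succ = (M.submatrix id Fin.succ * A) i j := by
  simp [mul_apply, Fin.sum_univ_succ]

theorem diagCons_mul_diagCons (a b : R) (A : Matrix (Fin n) (Fin m) R)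
    (B : Matrix (Fin m) (Fin k) R) : diagCons a A * diagCons b B = diagCons (a * b) (A * B) := by
  ext i j
  cases j using Fin.cases with
  | zero => cases i using Fin.cases <;> simp [mul_diagCons_apply_zero]
  | succ j => cases i using Fin.cases <;> rw [mul_diagCons_apply_succ] <;> simp [mul_apply]

theorem diagCons_one_one : diagCons (1 : R) (1 : Matrix (Fin n) (Fin n) R) = 1 := by
  ext i j
  cases j using Fin.cases <;> cases i using Fin.cases <;>
    simp [one_apply, Fin.succ_ne_zero, (Fin.succ_ne_zero _).symm]

theorem IsUnit.diagCons_one {P : Matrix (Fin n) (Fin n) R} (hP : IsUnit P) :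
    IsUnit (diagCons 1 P) := by
  obtain ⟨P', hPP', hP'P⟩ := isUnit_iff_exists.1 hP
  exact isUnit_iff_exists.2 ⟨diagCons 1 P',
    by simp [diagCons_mul_diagCons, hPP', diagCons_one_one],
    by simp [diagCons_mul_diagCons, hP'P, diagCons_one_one]⟩

theorem eq_diagCons (M : Matrix (Fin (n + 1)) (Fin (m + 1)) R)
    (hrow : ∀ j : Fin m, M 0 j.succ = 0) (hcol : ∀ i : Fin n, M i.succ 0 = 0) :
    M = diagCons (M 0 0) (M.submatrix Fin.succ Fin.succ) := by
  ext i j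
  cases i using Fin.cases <;> cases j using Fin.cases <;> simp [hrow, hcol]

theorem exists_isUnit_mul_mul_eq_diagCons_of_dvd {B : Matrix (Fin (n + 1)) (Fin (m + 1)) R}
    (hrow : ∀ j : Fin m, B 0 0 ∣ B 0 j.succ) (hcol : ∀ i : Fin n, B 0 0 ∣ B i.succ 0) :
    ∃ (P : Matrix (Fin (n + 1)) (Fin (n + 1)) R) (Q : Matrix (Fin (m + 1)) (Fin (m + 1)) R)
      (D : Matrix (Fin n) (Fin m) R), IsUnit P ∧ IsUnit Q ∧ P * B * Q = diagCons (B 0 0) D := by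
  choose q hq using hrow
  choose r hr using hcol
  set P : Matrix (Fin (n + 1)) (Fin (n + 1)) R := 1 + vecMulVec (vecCons 0 (-r)) (Pi.single 0 1)
  set Q : Matrix (Fin (m + 1)) (Fin (m + 1)) R := 1 + vecMulVec (Pi.single 0 1) (vecCons 0 (-q))
  have hP (M : Matrix (Fin (n + 1)) (Fin (m + 1)) R) :
      P * M = M + vecMulVec (vecCons 0 (-r)) (M 0) := by
    rw [Matrix.add_mul, Matrix.one_mul, vecMulVec_mul, single_vecMul, one_smul]
    rfl
  have hQ (M : Matrix (Fin (n + 1)) (Fin (m + 1)) R) :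
      M * Q = M + vecMulVec (fun i => M i 0) (vecCons 0 (-q)) := by
    rw [Matrix.mul_add, Matrix.mul_one, mul_vecMulVec, mulVec_single]
    congr
    ext i
    simp
  have hPBQ (i j) : (P * B * Q) i j =
      B i j + vecCons 0 (-r) i * B 0 j + (B i 0 + vecCons 0 (-r) i * B 0 0) * vecCons 0 (-q) j := by
    simp only [hP, hQ, Matrix.add_apply, vecMulVec_apply]
  have h00 : (P * B * Q) 0 0 = B 0 0 := by simp [hPBQ]
  refine ⟨P, Q, (P * B * Q).submatrix Fin.succ Fin.succ, isUnit_one_add_vecMulVec (by simp),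
    isUnit_one_add_vecMulVec (by simp), ?_⟩
  rw [← h00]
  refine eq_diagCons _ (fun j => ?_) (fun i => ?_)
  · simp [hPBQ, hq]
  · simp [hPBQ, hr, mul_comm]

def IsSmithNormalForm (D : Matrix (Fin n) (Fin m) R) : Prop :=
  (∀ (i : Fin n) (j : Fin m), (i : ℕ) ≠ (j : ℕ) → D i j = 0) ∧
    (∀ (i : Fin n) (j : Fin m) (i' : Fin n) (j' : Fin m), (i : ℕ) = (j : ℕ) →
      (i' : ℕ) = (j' : ℕ) → (i' : ℕ) = (i : ℕ) + 1 → D i j ∣ D i' j')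

theorem IsSmithNormalForm.diagCons {d : R} {D : Matrix (Fin n) (Fin m) R}
    (hD : D.IsSmithNormalForm) (hd : ∀ i j, d ∣ D i j) : (diagCons d D).IsSmithNormalForm := by
  constructor
  · intro i j hij
    cases i using Fin.cases <;> cases j using Fin.cases
    · exact absurd rfl hij
    · simp
    · simp
    · exact hD.1 _ _ (by simpa using hij)
  · intro i j i' j' hij hij' hii'
    cases i' using Fin.cases with
    | zero => simp at hii'
    | succ i' =>
      cases j' using Fin.cases with
      | zero => simp at hij'
      | succ j' =>
        cases i using Fin.cases <;> cases j using Fin.cases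
        · simpa using hd i' j'
        · simp at hij
        · simp at hij
        · simp at hij hij' hii'
          simpa using hD.2 _ _ _ _ hij hij' hii'

end Matrix

namespace StableRange1

variable [IsBezout R] {n m : ℕ}

theorem exists_isUnit_mulVec_eq_single (h : StableRange1 R) (b : Fin (n + 1) → R) :
    ∃ (U : Matrix (Fin (n + 1)) (Fin (n + 1)) R) (β : R), IsUnit U ∧ U *ᵥ b = Pi.single 0 β := by
  obtain ⟨t, ht⟩ := h.exists_span_range_eq_span_add_dotProduct b
  set g := b 0 + t ⬝ᵥ Fin.tail b
  have hg : ∀ i : Fin n, g ∣ b i.succ := fun i =>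
    Ideal.mem_span_singleton.1 (ht ▸ Ideal.subset_span ⟨i.succ, rfl⟩)
  choose q hq using hg
  -- `U₁` turns the first entry into `g`, which divides the others; `U₂` then clears them.
  set U₁ : Matrix (Fin (n + 1)) (Fin (n + 1)) R := 1 + vecMulVec (Pi.single 0 1) (vecCons 0 t)
  set U₂ : Matrix (Fin (n + 1)) (Fin (n + 1)) R := 1 + vecMulVec (vecCons 0 (-q)) (Pi.single 0 1)
  have hU₁ : U₁ *ᵥ b = b + Pi.single 0 (t ⬝ᵥ Fin.tail b) := by
    rw [add_mulVec, one_mulVec, vecMulVec_mulVec, cons_dotProduct]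
    ext i
    simp [Pi.single_apply]
    rfl
  have hU₂ (c : Fin (n + 1) → R) : U₂ *ᵥ c = c + c 0 • vecCons 0 (-q) := by
    rw [add_mulVec, one_mulVec, vecMulVec_mulVec]
    ext i
    simp [mul_comm]
  refine ⟨U₂ * U₁, g,
    (isUnit_one_add_vecMulVec (by simp)).mul (isUnit_one_add_vecMulVec (by simp)), ?_⟩
  rw [← mulVec_mulVec, hU₁, hU₂]
  ext i
  cases i using Fin.cases with
  | zero => simp [g]
  | succ i => simp [hq, g]

theorem exists_span_range_add_smul_eq (h : StableRange1 R) (u v : Fin (n + 1) → R) : ∃ x : R,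
    Ideal.span (Set.range (u + x • v)) = Ideal.span (Set.range u) ⊔ Ideal.span (Set.range v) := by
  obtain ⟨U, β, hU, hUu⟩ := h.exists_isUnit_mulVec_eq_single u
  set w := U *ᵥ v
  obtain ⟨γ, hγ⟩ := IsBezout.exists_span_eq_span_singleton (Set.finite_range (Fin.tail w))
  obtain ⟨x, hx⟩ := h.exists_span_add_mul_eq β (w 0) γ
  refine ⟨x, ?_⟩
  have htail : Fin.tail (Pi.single 0 β + x • w) = x • Fin.tail w := by
    ext i
    simp [Fin.tail]
  have hβ : Ideal.span (Set.range (Fin.tail (Pi.single 0 β : Fin (n + 1) → R))) = ⊥ :=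
    Ideal.span_eq_bot.2 <| by simp [Fin.tail]
  rw [← span_range_mulVec_of_isUnit hU, ← span_range_mulVec_of_isUnit hU u,
    ← span_range_mulVec_of_isUnit hU v, mulVec_add, mulVec_smul, hUu,
    Ideal.span_range_fin_succ, htail, Ideal.span_range_smul_of_eq x hγ,
    Ideal.span_range_fin_succ (Pi.single 0 β), Ideal.span_range_fin_succ w, hγ, hβ]
  simpa [Ideal.span_insert] using hx

theorem exists_isUnit_forall_mem_span_col_zero (h : StableRange1 R)
    (A : Matrix (Fin (n + 1)) (Fin (m + 1)) R) :
    ∃ Q : Matrix (Fin (m + 1)) (Fin (m + 1)) R, IsUnit Q ∧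
      ∀ i j, A i j ∈ Ideal.span (Set.range fun k => (A * Q) k 0) := by
  induction m with
  | zero =>
    refine ⟨1, isUnit_one, fun i j => ?_⟩
    rw [Fin.eq_zero j, Matrix.mul_one]
    exact Ideal.subset_span ⟨i, rfl⟩
  | succ m ih =>
    set A' := A.submatrix id Fin.succ
    obtain ⟨Q', hQ', hA'⟩ := ih A'
    obtain ⟨x, hx⟩ := h.exists_span_range_add_smul_eq (fun k => A k 0) (fun k => (A' * Q') k 0)
    -- apply `Q'` to the last columns, then add `x` times the second column to the first
    set Q := diagCons 1 Q' * (1 + vecMulVec (Pi.single (Fin.succ 0) x) (Pi.single 0 1))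
    have hQ : IsUnit Q := hQ'.diagCons_one.mul (isUnit_one_add_vecMulVec (by simp))
    have hcol : (fun k => (A * Q) k 0) = (fun k => A k 0) + x • (fun k => (A' * Q') k 0) := by
      ext k
      rw [← Matrix.mul_assoc, Matrix.mul_add, Matrix.mul_one, mul_vecMulVec, mulVec_single]
      simp [vecMulVec_apply, mul_diagCons_apply_zero, mul_comm]
      rw [← Fin.succ_zero_eq_one, mul_diagCons_apply_succ]
    refine ⟨Q, hQ, fun i j => ?_⟩
    rw [hcol, hx]
    cases j using Fin.cases with
    | zero => exact Ideal.mem_sup_left (Ideal.subset_span ⟨i, rfl⟩)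
    | succ j => exact Ideal.mem_sup_right (hA' i j)

theorem exists_isUnit_forall_mul_mul_apply_zero_zero_dvd (h : StableRange1 R)
    (A : Matrix (Fin (n + 1)) (Fin (m + 1)) R) :
    ∃ (P : Matrix (Fin (n + 1)) (Fin (n + 1)) R) (Q : Matrix (Fin (m + 1)) (Fin (m + 1)) R),
      IsUnit P ∧ IsUnit Q ∧ ∀ i j, (P * A * Q) 0 0 ∣ A i j := by
  obtain ⟨Q, hQ, hAQ⟩ := h.exists_isUnit_forall_mem_span_col_zero A
  obtain ⟨P, β, hP, hPβ⟩ := h.exists_isUnit_mulVec_eq_single fun k => (A * Q) k 0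
  have hβ : (P * A * Q) 0 0 = β :=
    calc (P * A * Q) 0 0 = (P *ᵥ fun k => (A * Q) k 0) 0 := by rw [Matrix.mul_assoc]; rfl
      _ = β := by simp [hPβ]
  have hle : Ideal.span (Set.range fun k => (A * Q) k 0) ≤ Ideal.span {β} := by
    rw [← span_range_mulVec_of_isUnit hP, hPβ, Ideal.span_le, Set.range_subset_iff]
    intro k
    by_cases hk : k = 0 <;> simp [hk]
  exact ⟨P, Q, hP, hQ, fun i j => hβ ▸ Ideal.mem_span_singleton.1 (hle (hAQ i j))⟩

theorem exists_isUnit_mul_mul_eq_diagCons (h : StableRange1 R)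
    (A : Matrix (Fin (n + 1)) (Fin (m + 1)) R) :
    ∃ (P : Matrix (Fin (n + 1)) (Fin (n + 1)) R) (Q : Matrix (Fin (m + 1)) (Fin (m + 1)) R)
      (d : R) (D : Matrix (Fin n) (Fin m) R),
      IsUnit P ∧ IsUnit Q ∧ P * A * Q = diagCons d D ∧ ∀ i j, d ∣ D i j := by
  obtain ⟨P₀, Q₀, hP₀, hQ₀, hdvd⟩ := h.exists_isUnit_forall_mul_mul_apply_zero_zero_dvd A
  set B := P₀ * A * Q₀
  have hB : ∀ i j, B 0 0 ∣ B i j := dvd_mul_mul_apply hdvd P₀ Q₀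
  obtain ⟨P₁, Q₁, D, hP₁, hQ₁, hD⟩ :=
    exists_isUnit_mul_mul_eq_diagCons_of_dvd (fun j => hB 0 j.succ) (fun i => hB i.succ 0)
  refine ⟨P₁ * P₀, Q₀ * Q₁, B 0 0, D, hP₁.mul hP₀, hQ₀.mul hQ₁, ?_, fun i j => ?_⟩
  · simpa only [B, Matrix.mul_assoc] using hD
  · simpa [hD] using dvd_mul_mul_apply hB P₁ Q₁ i.succ j.succ

theorem exists_isUnit_isSmithNormalForm (h : StableRange1 R) :
    ∀ {n m : ℕ} (A : Matrix (Fin n) (Fin m) R),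
      ∃ (P : Matrix (Fin n) (Fin n) R) (Q : Matrix (Fin m) (Fin m) R),
        IsUnit P ∧ IsUnit Q ∧ (P * A * Q).IsSmithNormalForm
  | 0, _, _ => ⟨1, 1, isUnit_one, isUnit_one, fun i => i.elim0, fun i => i.elim0⟩
  | _ + 1, 0, _ => ⟨1, 1, isUnit_one, isUnit_one, fun _ j => j.elim0, fun _ j => j.elim0⟩
  | _ + 1, _ + 1, A => by
    obtain ⟨P₀, Q₀, d, D, hP₀, hQ₀, hA, hd⟩ := h.exists_isUnit_mul_mul_eq_diagCons A
    obtain ⟨P, Q, hP, hQ, hPDQ⟩ := h.exists_isUnit_isSmithNormalForm D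
    refine ⟨diagCons 1 P * P₀, Q₀ * diagCons 1 Q, hP.diagCons_one.mul hP₀,
      hQ₀.mul hQ.diagCons_one, ?_⟩
    have : diagCons 1 P * P₀ * A * (Q₀ * diagCons 1 Q) = diagCons d (P * D * Q) :=
      calc _ = diagCons 1 P * (P₀ * A * Q₀) * diagCons 1 Q := by simp only [Matrix.mul_assoc]
        _ = _ := by rw [hA, diagCons_mul_diagCons, diagCons_mul_diagCons, one_mul, mul_one]
    exact this ▸ hPDQ.diagCons (dvd_mul_mul_apply hd P Q)

end StableRange1

end

theorem elementaryDivisorRing_of_bezout_stableRange1 (R : Type*) [CommRing R]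
    [IsBezout R] (h : StableRange1 R) : ElementaryDivisorRing R := by
  intro n m A
  exact h.exists_isUnit_isSmithNormalForm A
end
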